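/- arXiv:1908.08208 — 6 statements merged into one kernel-verified Lean document; each statement's English description precedes it below -/
import Mathlib

section
/- The operator T has a unique fixed point p* in the order interval [u0, v0]: there exists a continuous function p* : [0,1] → ℝ with u0 ≤ p* ≤ v0 pointwise such that T p* = p*, and any q in [u0, v0] with T q = q equals p*. -/
/-!
Write `a = c'(0)`. Convexity gives `a s ≤ c s`, so `T` maps the order interval `[a s, c s]` into
itself, and it is monotone in `p`. Near `0` the increments of `c` are at most `δ a` per unit, so
`T p = c` on some `[0, s₀]` for every `p` in the interval.

Comparison: let `q` be a fixed point. If `q s < a s₀ δ^(j+1)`, a nearly optimal `(k, t)` for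
`q s` has `δ q (t/k) ≤ δ k q (t/k) < a s₀ δ^(j+1)`, so it only looks at a point where
`q < a s₀ δ^j`. By induction on `j`, anything below `c` with `w_(j+1) ≤ T w_j` satisfies
`w_j ≤ q` where `q < a s₀ δ^j`, and since `q ≤ c 1` finitely many steps cover `[0, 1]`.
Applied to a second fixed point this gives uniqueness; applied to the decreasing iterates `T^n c`
it shows that they reach their infimum, a fixed point, after finitely many steps, so that the
infimum inherits continuity from the iterates (`T` preserves continuity of monotone functions, with
modulus `c 1 - c (1 - h)`).
-/

open Set Filter

noncomputable def Tmap (c : ℝ → ℝ) (g : ℕ → ℝ) (δ : ℝ) (p : ℝ → ℝ) (s : ℝ) : ℝ :=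
  sInf {y : ℝ | ∃ k : ℕ, ∃ t : ℝ, 1 ≤ k ∧ 0 ≤ t ∧ t ≤ s ∧
    y = c (s - t) + g k + δ * k * p (t / k)}

open Topology

section ConvexSlope

variable {𝕜 : Type*} [Field 𝕜] [LinearOrder 𝕜] [IsStrictOrderedRing 𝕜] {s : Set 𝕜} {f : 𝕜 → 𝕜}

theorem ConvexOn.slope_le_slope (hf : ConvexOn 𝕜 s f) {x₁ y₁ x₂ y₂ : 𝕜} (hx₁ : x₁ ∈ s)
    (hy₂ : y₂ ∈ s) (h₁ : x₁ < y₁) (h₂ : x₂ < y₂) (hx : x₁ ≤ x₂) (hy : y₁ ≤ y₂) :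
    slope f x₁ y₁ ≤ slope f x₂ y₂ := by
  have hy₁ : y₁ ∈ s := hf.1.ordConnected.out hx₁ hy₂ ⟨h₁.le, hy⟩
  have hx₂ : x₂ ∈ s := hf.1.ordConnected.out hx₁ hy₂ ⟨hx, h₂.le⟩
  calc slope f x₁ y₁ ≤ slope f x₁ y₂ :=
        hf.slope_mono hx₁ ⟨hy₁, h₁.ne'⟩ ⟨hy₂, (h₁.trans_le hy).ne'⟩ hy
    _ = slope f y₂ x₁ := slope_comm f _ _
    _ ≤ slope f y₂ x₂ := hf.slope_mono hy₂ ⟨hx₁, (h₁.trans_le hy).ne⟩ ⟨hx₂, h₂.ne⟩ hx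
    _ = slope f x₂ y₂ := slope_comm f _ _

theorem ConvexOn.sub_le_sub_of_le (hf : ConvexOn 𝕜 s f) {u v u' v' : 𝕜} (hu : u ∈ s)
    (hv' : v' ∈ s) (huv : u ≤ v) (hu' : u ≤ u') (hvv' : v - u = v' - u') :
    f v - f u ≤ f v' - f u' := by
  rcases huv.eq_or_lt with rfl | huv
  · rw [sub_self, eq_comm, sub_eq_zero] at hvv'
    simp [hvv']
  have h := hf.slope_le_slope hu hv' huv (by linarith) hu' (by linarith)
  rwa [slope_def_field, slope_def_field, ← hvv', div_le_div_iff_of_pos_right (sub_pos.2 huv)] at h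

end ConvexSlope

theorem ConvexOn.exists_sub_le_mul_sub {f : ℝ → ℝ} {x y f' b : ℝ} (hf : ConvexOn ℝ (Icc x y) f)
    (hxy : x < y) (hf' : HasDerivWithinAt f f' (Ioi x) x) (hb : f' < b) :
    ∃ z, x < z ∧ ∀ u v, x ≤ u → u ≤ v → v ≤ z → f v - f u ≤ b * (v - u) := by
  have hslope : Tendsto (slope f x) (𝓝[>] x) (𝓝 f') :=
    (hasDerivWithinAt_iff_tendsto_slope' self_notMem_Ioi).mp hf'
  have hdouble : Tendsto (fun z => 2 * z - x) (𝓝[>] x) (𝓝[>] x) := by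
    refine tendsto_nhdsWithin_iff.2 ⟨?_, eventually_nhdsWithin_of_forall fun z (hz : x < z) => ?_⟩
    · exact ((by fun_prop : Continuous fun z : ℝ => 2 * z - x).tendsto' x x (by ring)).mono_left
        nhdsWithin_le_nhds
    · show x < 2 * z - x
      linarith
  -- the slope on `[z, 2z - x]` is a combination of two slopes from `x`
  have hcomb : Tendsto (fun z => 2 * slope f x (2 * z - x) - slope f x z) (𝓝[>] x)
      (𝓝 (2 * f' - f')) := ((hslope.comp hdouble).const_mul 2).sub hslope
  rw [show 2 * f' - f' = f' by ring] at hcomb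
  have hright : ∀ᶠ z in 𝓝[>] x, 2 * z - x ≤ y :=
    eventually_nhdsWithin_of_eventually_nhds (eventually_le_nhds (by linarith : x < (x + y) / 2))
      |>.mono fun z hz => by linarith
  obtain ⟨z, ⟨hzb, hzy⟩, hxz : x < z⟩ :=
    ((hcomb.eventually (gt_mem_nhds hb)).and hright |>.and self_mem_nhdsWithin).exists
  refine ⟨z, hxz, fun u v hxu huv hvz => ?_⟩
  rcases huv.eq_or_lt with rfl | huv
  · simp
  have hle := hf.slope_le_slope (x₂ := z) ⟨hxu, by linarith⟩ ⟨by linarith, hzy⟩ huv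
    (by linarith) (by linarith) (by linarith)
  have hz : slope f z (2 * z - x) = 2 * slope f x (2 * z - x) - slope f x z := by
    have hzx : z - x ≠ 0 := (sub_pos.2 hxz).ne'
    rw [slope_def_field, slope_def_field, slope_def_field, show 2 * z - x - z = z - x by ring,
      show 2 * z - x - x = 2 * (z - x) by ring]
    field_simp
    ring
  rw [slope_def_field] at hle
  rw [← hz] at hzb
  have := (div_le_iff₀ (sub_pos.2 huv)).1 (hle.trans hzb.le)
  linarith

def OrderInterval (a : ℝ) (c : ℝ → ℝ) : Set (ℝ → ℝ) :=
  {p | ∀ s ∈ Icc (0 : ℝ) 1, a * s ≤ p s ∧ p s ≤ c s}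

section Tmap

variable {c : ℝ → ℝ} {g : ℕ → ℝ} {δ a : ℝ}

theorem le_Tmap {p : ℝ → ℝ} {s y : ℝ} (hs : 0 ≤ s)
    (h : ∀ (k : ℕ) (t : ℝ), 1 ≤ k → 0 ≤ t → t ≤ s → y ≤ c (s - t) + g k + δ * k * p (t / k)) :
    y ≤ Tmap c g δ p s :=
  le_csInf ⟨_, 1, 0, le_rfl, le_rfl, hs, rfl⟩ fun _ ⟨k, t, hk, ht, hts, hy⟩ => hy ▸ h k t hk ht hts

theorem exists_lt_of_Tmap_lt {p : ℝ → ℝ} {s y : ℝ} (hs : 0 ≤ s) (h : Tmap c g δ p s < y) :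
    ∃ (k : ℕ) (t : ℝ), 1 ≤ k ∧ 0 ≤ t ∧ t ≤ s ∧ c (s - t) + g k + δ * k * p (t / k) < y := by
  unfold Tmap at h
  obtain ⟨_, ⟨k, t, hk, ht, hts, rfl⟩, hy⟩ :=
    exists_lt_of_csInf_lt (by exact ⟨_, 1, 0, le_rfl, le_rfl, hs, rfl⟩) h
  exact ⟨k, t, hk, ht, hts, hy⟩

theorem div_natCast_mem_Icc {k : ℕ} {t s : ℝ} (hk : 1 ≤ k) (ht : 0 ≤ t) (hts : t ≤ s)
    (hs : s ≤ 1) : t / k ∈ Icc (0 : ℝ) 1 :=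
  ⟨by positivity, (div_le_self ht (by exact_mod_cast hk)).trans (hts.trans hs)⟩

noncomputable def iInfIterate (c : ℝ → ℝ) (g : ℕ → ℝ) (δ : ℝ) (s : ℝ) : ℝ :=
  ⨅ n, (Tmap c g δ)^[n] c s

structure StandingAssumptions (c : ℝ → ℝ) (g : ℕ → ℝ) (δ a : ℝ) : Prop where
  one_lt : 1 < δ
  pos : 0 < a
  map_zero : c 0 = 0
  continuousOn : ContinuousOn c (Icc 0 1)
  monotoneOn : MonotoneOn c (Icc 0 1)
  convexOn : ConvexOn ℝ (Icc 0 1) c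
  hasDerivWithinAt : HasDerivWithinAt c a (Ioi 0) 0
  g_one : g 1 = 0
  g_nonneg : ∀ k : ℕ, 1 ≤ k → 0 ≤ g k

namespace StandingAssumptions

theorem mul_le (H : StandingAssumptions c g δ a) {x : ℝ} (hx : x ∈ Icc (0 : ℝ) 1) :
    a * x ≤ c x := by
  rcases hx.1.eq_or_lt with rfl | hx₀
  · simp [H.map_zero]
  have := H.convexOn.le_slope_of_hasDerivWithinAt_Ioi (left_mem_Icc.2 zero_le_one) hx hx₀
    H.hasDerivWithinAt
  rwa [slope_def_field, H.map_zero, sub_zero, sub_zero, le_div_iff₀ hx₀] at this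

theorem delta_pos (H : StandingAssumptions c g δ a) : 0 < δ := zero_lt_one.trans H.one_lt

theorem nonneg (H : StandingAssumptions c g δ a) {x : ℝ} (hx : x ∈ Icc (0 : ℝ) 1) : 0 ≤ c x :=
  (mul_nonneg H.pos.le hx.1).trans (H.mul_le hx)

theorem self_mem_orderInterval (H : StandingAssumptions c g δ a) : c ∈ OrderInterval a c :=
  fun _ hx => ⟨H.mul_le hx, le_rfl⟩

theorem eq_zero_of_mem_orderInterval (H : StandingAssumptions c g δ a) {p : ℝ → ℝ}
    (hp : p ∈ OrderInterval a c) : p 0 = 0 := by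
  have := hp 0 (left_mem_Icc.2 zero_le_one)
  rw [mul_zero, H.map_zero] at this
  exact le_antisymm this.2 this.1

theorem exists_sub_le (H : StandingAssumptions c g δ a) :
    ∃ s₀, 0 < s₀ ∧ ∀ u v, 0 ≤ u → u ≤ v → v ≤ s₀ → c v - c u ≤ δ * a * (v - u) :=
  H.convexOn.exists_sub_le_mul_sub zero_lt_one H.hasDerivWithinAt
    (lt_mul_of_one_lt_left H.pos H.one_lt)

theorem sub_le_sub_one (H : StandingAssumptions c g δ a) {u v : ℝ} (hu : 0 ≤ u) (huv : u ≤ v)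
    (hv : v ≤ 1) : c v - c u ≤ c 1 - c (1 - (v - u)) :=
  H.convexOn.sub_le_sub_of_le ⟨hu, huv.trans hv⟩ (right_mem_Icc.2 zero_le_one) huv (by linarith)
    (by ring)

theorem mul_le_summand (H : StandingAssumptions c g δ a) {p : ℝ → ℝ} (hp : p ∈ OrderInterval a c)
    {s t : ℝ} {k : ℕ} (hs : s ≤ 1) (hk : 1 ≤ k) (ht : 0 ≤ t) (hts : t ≤ s) :
    a * s ≤ c (s - t) + g k + δ * k * p (t / k) := by
  have hk₀ : (0 : ℝ) < k := by exact_mod_cast hk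
  have hc := H.mul_le (x := s - t) ⟨by linarith, by linarith⟩
  have hpt := (hp _ (div_natCast_mem_Icc hk ht hts hs)).1
  have hδ : a * t ≤ δ * k * p (t / k) :=
    calc a * t ≤ δ * (a * t) := le_mul_of_one_le_left (mul_nonneg H.pos.le ht) H.one_lt.le
      _ = δ * k * (a * (t / k)) := by field_simp
      _ ≤ δ * k * p (t / k) := by have := H.delta_pos; gcongr
  linarith [H.g_nonneg k hk]

theorem Tmap_le (H : StandingAssumptions c g δ a) {p : ℝ → ℝ} (hp : p ∈ OrderInterval a c)
    {s t : ℝ} {k : ℕ} (hs : s ≤ 1) (hk : 1 ≤ k) (ht : 0 ≤ t) (hts : t ≤ s) :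
    Tmap c g δ p s ≤ c (s - t) + g k + δ * k * p (t / k) :=
  csInf_le ⟨a * s, fun _ ⟨_, _, hk, ht, hts, hy⟩ => hy ▸ H.mul_le_summand hp hs hk ht hts⟩
    ⟨k, t, hk, ht, hts, rfl⟩

theorem Tmap_mem (H : StandingAssumptions c g δ a) {p : ℝ → ℝ} (hp : p ∈ OrderInterval a c) :
    Tmap c g δ p ∈ OrderInterval a c := fun s hs =>
  ⟨le_Tmap hs.1 fun _ _ hk ht hts => H.mul_le_summand hp hs.2 hk ht hts, by
    simpa [H.eq_zero_of_mem_orderInterval hp, H.g_one] using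
      H.Tmap_le hp hs.2 le_rfl le_rfl hs.1⟩

theorem Tmap_mono (H : StandingAssumptions c g δ a) {p q : ℝ → ℝ} (hp : p ∈ OrderInterval a c)
    (hpq : ∀ x ∈ Icc (0 : ℝ) 1, p x ≤ q x) {s : ℝ} (hs : s ∈ Icc (0 : ℝ) 1) :
    Tmap c g δ p s ≤ Tmap c g δ q s :=
  le_Tmap hs.1 fun k t hk ht hts => by
    have := hpq _ (div_natCast_mem_Icc hk ht hts hs.2)
    have := H.Tmap_le hp hs.2 hk ht hts
    have : δ * k * p (t / k) ≤ δ * k * q (t / k) := by have := H.delta_pos; gcongr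
    linarith

theorem Tmap_eq_of_le (H : StandingAssumptions c g δ a) {s₀ : ℝ}
    (hs₀ : ∀ u v, 0 ≤ u → u ≤ v → v ≤ s₀ → c v - c u ≤ δ * a * (v - u)) {p : ℝ → ℝ}
    (hp : p ∈ OrderInterval a c) {s : ℝ} (hs : s ∈ Icc (0 : ℝ) 1) (hss₀ : s ≤ s₀) :
    Tmap c g δ p s = c s := by
  refine le_antisymm ((H.Tmap_mem hp s hs).2) (le_Tmap hs.1 fun k t hk ht hts => ?_)
  have hk₀ : (0 : ℝ) < k := by exact_mod_cast hk
  have hpt := (hp _ (div_natCast_mem_Icc hk ht hts hs.2)).1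
  have hincr := hs₀ (s - t) s (by linarith) (by linarith) hss₀
  have : δ * a * t ≤ δ * k * p (t / k) :=
    calc δ * a * t = δ * k * (a * (t / k)) := by field_simp
      _ ≤ δ * k * p (t / k) := by have := H.delta_pos; gcongr
  linarith [H.g_nonneg k hk]

theorem monotoneOn_Tmap (H : StandingAssumptions c g δ a) {p : ℝ → ℝ}
    (hp : p ∈ OrderInterval a c) (hpm : MonotoneOn p (Icc 0 1)) :
    MonotoneOn (Tmap c g δ p) (Icc 0 1) := by
  intro s' hs' s hs hss
  refine le_Tmap hs.1 fun k t hk ht hts => ?_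
  have hk₀ : (0 : ℝ) < k := by exact_mod_cast hk
  have := H.delta_pos
  rcases le_or_gt t s' with hts' | hst'
  · have : c (s' - t) ≤ c (s - t) := H.monotoneOn ⟨by linarith, by linarith [hs'.2]⟩
      ⟨by linarith, by linarith [hs.2]⟩ (by linarith)
    linarith [H.Tmap_le hp hs'.2 hk ht hts']
  -- for `t > s'`, compare with the choice `t = s'` at `s'`
  · have hp' : p (s' / k) ≤ p (t / k) := hpm (div_natCast_mem_Icc hk hs'.1 le_rfl hs'.2)
      (div_natCast_mem_Icc hk ht hts hs.2) (by gcongr)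
    have : δ * k * p (s' / k) ≤ δ * k * p (t / k) := by gcongr
    have := H.Tmap_le hp hs'.2 hk hs'.1 le_rfl
    rw [sub_self, H.map_zero] at this
    linarith [H.nonneg (x := s - t) ⟨by linarith, by linarith [hs.2]⟩]

theorem Tmap_le_add (H : StandingAssumptions c g δ a) {p : ℝ → ℝ} (hp : p ∈ OrderInterval a c)
    {s' s : ℝ} (hs' : 0 ≤ s') (hs : s ≤ 1) (hss : s' ≤ s) :
    Tmap c g δ p s ≤ Tmap c g δ p s' + (c 1 - c (1 - (s - s'))) := by
  rw [← sub_le_iff_le_add]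
  refine le_Tmap hs' fun k t hk ht hts => ?_
  have := H.sub_le_sub_one (u := s' - t) (v := s - t) (by linarith) (by linarith) (by linarith)
  rw [show s - t - (s' - t) = s - s' by ring] at this
  linarith [H.Tmap_le hp hs hk ht (hts.trans hss)]

theorem abs_Tmap_sub_le (H : StandingAssumptions c g δ a) {p : ℝ → ℝ}
    (hp : p ∈ OrderInterval a c) (hpm : MonotoneOn p (Icc 0 1)) {s s' : ℝ}
    (hs : s ∈ Icc (0 : ℝ) 1) (hs' : s' ∈ Icc (0 : ℝ) 1) :
    |Tmap c g δ p s - Tmap c g δ p s'| ≤ c 1 - c (1 - |s - s'|) := by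
  wlog hss : s' ≤ s generalizing s s'
  · rw [abs_sub_comm, abs_sub_comm s]
    exact this hs' hs (le_of_not_ge hss)
  rw [abs_of_nonneg (sub_nonneg.2 (H.monotoneOn_Tmap hp hpm hs' hs hss)),
    abs_of_nonneg (sub_nonneg.2 hss)]
  linarith [H.Tmap_le_add hp hs'.1 hs.2 hss]

theorem continuousOn_Tmap (H : StandingAssumptions c g δ a) {p : ℝ → ℝ}
    (hp : p ∈ OrderInterval a c) (hpm : MonotoneOn p (Icc 0 1)) :
    ContinuousOn (Tmap c g δ p) (Icc 0 1) := by
  intro s hs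
  have hshift : Tendsto (fun s' => 1 - |s' - s|) (𝓝[Icc 0 1] s) (𝓝[Icc 0 1] 1) := by
    refine tendsto_nhdsWithin_iff.2 ⟨?_, eventually_nhdsWithin_of_forall fun s' hs' => ?_⟩
    · exact ((by fun_prop : Continuous fun s' : ℝ => 1 - |s' - s|).tendsto' s 1
        (by simp)).mono_left nhdsWithin_le_nhds
    · have := abs_sub_le_iff.2 (⟨by linarith [hs'.2, hs.1], by linarith [hs'.1, hs.2]⟩ :
        s' - s ≤ 1 ∧ s - s' ≤ 1)
      exact ⟨by linarith, by linarith [abs_nonneg (s' - s)]⟩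
  have hmod : Tendsto (fun s' => c 1 - c (1 - |s' - s|)) (𝓝[Icc 0 1] s) (𝓝 0) := by
    simpa using (tendsto_const_nhds (x := c 1)).sub
      ((H.continuousOn 1 (right_mem_Icc.2 zero_le_one)).tendsto.comp hshift)
  refine tendsto_iff_dist_tendsto_zero.2 (squeeze_zero' (Eventually.of_forall fun _ => dist_nonneg)
    (eventually_nhdsWithin_of_forall fun s' hs' => ?_) hmod)
  exact (Real.dist_eq _ _).trans_le (H.abs_Tmap_sub_le hp hpm hs' hs)

theorem le_of_lt_mul_pow (H : StandingAssumptions c g δ a) {s₀ : ℝ}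
    (hs₀ : ∀ u v, 0 ≤ u → u ≤ v → v ≤ s₀ → c v - c u ≤ δ * a * (v - u)) {q : ℝ → ℝ}
    (hq : q ∈ OrderInterval a c) (hTq : EqOn (Tmap c g δ q) q (Icc 0 1))
    {w : ℕ → ℝ → ℝ} (hw : ∀ j, w j ∈ OrderInterval a c)
    (hwT : ∀ j, ∀ s ∈ Icc (0 : ℝ) 1, w (j + 1) s ≤ Tmap c g δ (w j) s) (j : ℕ) :
    ∀ s ∈ Icc (0 : ℝ) 1, q s < a * s₀ * δ ^ j → w j s ≤ q s := by
  have hδ := H.delta_pos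
  induction j with
  | zero =>
    intro s hs hqs
    have hss₀ : s ≤ s₀ := le_of_mul_le_mul_left (by linarith [(hq s hs).1]) H.pos
    rw [← hTq hs, H.Tmap_eq_of_le hs₀ hq hs hss₀]
    exact (hw 0 s hs).2
  | succ j ih =>
    intro s hs hqs
    refine le_of_forall_pos_lt_add fun ε hε => ?_
    obtain ⟨k, t, hk, ht, hts, hlt⟩ :=
      exists_lt_of_Tmap_lt (y := min (q s + ε) (a * s₀ * δ ^ (j + 1))) hs.1
        (by rw [hTq hs]; exact lt_min (by linarith) hqs)
    have hk₁ : (1 : ℝ) ≤ k := by exact_mod_cast hk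
    have htk := div_natCast_mem_Icc hk ht hts hs.2
    -- a nearly optimal plan for `q` only uses `q` at a point where it is `δ` times smaller
    have hleaf : q (t / k) < a * s₀ * δ ^ j := by
      have hq₀ : 0 ≤ q (t / k) := (mul_nonneg H.pos.le htk.1).trans (hq _ htk).1
      have : δ * q (t / k) ≤ δ * k * q (t / k) := by
        rw [mul_assoc]; exact mul_le_mul_of_nonneg_left (le_mul_of_one_le_left hq₀ hk₁) hδ.le
      refine lt_of_mul_lt_mul_left ?_ hδ.le
      have hpow : a * s₀ * δ ^ (j + 1) = δ * (a * s₀ * δ ^ j) := by ring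
      linarith [hlt.trans_le (min_le_right _ _),
        H.nonneg (x := s - t) ⟨by linarith, by linarith [hs.2]⟩, H.g_nonneg k hk]
    have : δ * k * w j (t / k) ≤ δ * k * q (t / k) := by gcongr; exact ih _ htk hleaf
    linarith [hwT j s hs, H.Tmap_le (hw j) hs.2 hk ht hts, hlt.trans_le (min_le_left _ _)]

theorem exists_le_of_eqOn_Tmap (H : StandingAssumptions c g δ a) {q : ℝ → ℝ}
    (hq : q ∈ OrderInterval a c) (hTq : EqOn (Tmap c g δ q) q (Icc 0 1))
    {w : ℕ → ℝ → ℝ} (hw : ∀ j, w j ∈ OrderInterval a c)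
    (hwT : ∀ j, ∀ s ∈ Icc (0 : ℝ) 1, w (j + 1) s ≤ Tmap c g δ (w j) s) :
    ∃ J, ∀ s ∈ Icc (0 : ℝ) 1, w J s ≤ q s := by
  obtain ⟨s₀, hs₀, hslope⟩ := H.exists_sub_le
  obtain ⟨J, hJ⟩ := pow_unbounded_of_one_lt (c 1 / (a * s₀)) H.one_lt
  refine ⟨J, fun s hs => H.le_of_lt_mul_pow hslope hq hTq hw hwT J s hs ?_⟩
  rw [div_lt_iff₀' (mul_pos H.pos hs₀)] at hJ
  exact ((hq s hs).2.trans (H.monotoneOn hs (right_mem_Icc.2 zero_le_one) hs.2)).trans_lt hJ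

theorem le_of_eqOn_Tmap (H : StandingAssumptions c g δ a) {p q : ℝ → ℝ}
    (hp : p ∈ OrderInterval a c) (hq : q ∈ OrderInterval a c)
    (hTp : EqOn (Tmap c g δ p) p (Icc 0 1)) (hTq : EqOn (Tmap c g δ q) q (Icc 0 1)) :
    ∀ s ∈ Icc (0 : ℝ) 1, p s ≤ q s :=
  (H.exists_le_of_eqOn_Tmap hq hTq (fun _ => hp) fun _ _ hs => (hTp hs).ge).choose_spec

theorem eqOn_of_eqOn_Tmap (H : StandingAssumptions c g δ a) {p q : ℝ → ℝ}
    (hp : p ∈ OrderInterval a c) (hq : q ∈ OrderInterval a c)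
    (hTp : EqOn (Tmap c g δ p) p (Icc 0 1)) (hTq : EqOn (Tmap c g δ q) q (Icc 0 1)) :
    EqOn p q (Icc 0 1) := fun s hs =>
  le_antisymm (H.le_of_eqOn_Tmap hp hq hTp hTq s hs) (H.le_of_eqOn_Tmap hq hp hTq hTp s hs)

theorem iterate_Tmap_mem (H : StandingAssumptions c g δ a) (n : ℕ) :
    (Tmap c g δ)^[n] c ∈ OrderInterval a c := by
  induction n with
  | zero => exact H.self_mem_orderInterval
  | succ n ih => rw [Function.iterate_succ_apply']; exact H.Tmap_mem ih

theorem monotoneOn_iterate_Tmap (H : StandingAssumptions c g δ a) (n : ℕ) :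
    MonotoneOn ((Tmap c g δ)^[n] c) (Icc 0 1) := by
  induction n with
  | zero => exact H.monotoneOn
  | succ n ih =>
    rw [Function.iterate_succ_apply']; exact H.monotoneOn_Tmap (H.iterate_Tmap_mem n) ih

theorem continuousOn_iterate_Tmap (H : StandingAssumptions c g δ a) (n : ℕ) :
    ContinuousOn ((Tmap c g δ)^[n] c) (Icc 0 1) := by
  cases n with
  | zero => exact H.continuousOn
  | succ n =>
    rw [Function.iterate_succ_apply']
    exact H.continuousOn_Tmap (H.iterate_Tmap_mem n) (H.monotoneOn_iterate_Tmap n)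

theorem iInfIterate_le (H : StandingAssumptions c g δ a) {s : ℝ} (hs : s ∈ Icc (0 : ℝ) 1)
    (n : ℕ) : iInfIterate c g δ s ≤ (Tmap c g δ)^[n] c s :=
  ciInf_le ⟨a * s, by rintro _ ⟨m, rfl⟩; exact (H.iterate_Tmap_mem m s hs).1⟩ n

theorem iInfIterate_mem (H : StandingAssumptions c g δ a) :
    iInfIterate c g δ ∈ OrderInterval a c := fun s hs =>
  ⟨le_ciInf fun n => (H.iterate_Tmap_mem n s hs).1, H.iInfIterate_le hs 0⟩

theorem eqOn_Tmap_iInfIterate (H : StandingAssumptions c g δ a) :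
    EqOn (Tmap c g δ (iInfIterate c g δ)) (iInfIterate c g δ) (Icc 0 1) := by
  intro s hs
  refine le_antisymm (le_ciInf fun n => ?_) (le_Tmap hs.1 fun k t hk ht hts => ?_)
  · cases n with
    | zero => exact (H.Tmap_mem H.iInfIterate_mem s hs).2
    | succ n =>
      rw [Function.iterate_succ_apply']
      exact H.Tmap_mono H.iInfIterate_mem (fun x hx => H.iInfIterate_le hx n) hs
  have hδk : 0 < δ * k := mul_pos H.delta_pos (by exact_mod_cast hk)
  refine le_of_forall_pos_lt_add fun ε hε => ?_
  obtain ⟨n, hn⟩ := exists_lt_of_ciInf_lt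
    (lt_add_of_pos_right (iInfIterate c g δ (t / k)) (div_pos hε hδk))
  have hstep :
      (Tmap c g δ)^[n + 1] c s ≤ c (s - t) + g k + δ * k * (Tmap c g δ)^[n] c (t / k) := by
    rw [Function.iterate_succ_apply']; exact H.Tmap_le (H.iterate_Tmap_mem n) hs.2 hk ht hts
  have : δ * k * (Tmap c g δ)^[n] c (t / k) < δ * k * iInfIterate c g δ (t / k) + ε := by
    calc _ < δ * k * (iInfIterate c g δ (t / k) + ε / (δ * k)) := by gcongr
      _ = _ := by rw [mul_add, mul_div_cancel₀ _ hδk.ne']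
  linarith [H.iInfIterate_le hs (n + 1)]

theorem continuousOn_iInfIterate (H : StandingAssumptions c g δ a) :
    ContinuousOn (iInfIterate c g δ) (Icc 0 1) := by
  obtain ⟨J, hJ⟩ := H.exists_le_of_eqOn_Tmap H.iInfIterate_mem H.eqOn_Tmap_iInfIterate
    H.iterate_Tmap_mem fun n s _ => (congrFun (Function.iterate_succ_apply' _ n c) s).le
  exact (H.continuousOn_iterate_Tmap J).congr fun s hs =>
    le_antisymm (H.iInfIterate_le hs J) (hJ s hs)

end StandingAssumptions

end Tmap

theorem unique_equilibrium_price_general (c : ℝ → ℝ) (g : ℕ → ℝ) (δ : ℝ)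
(hc_diff : DifferentiableOn ℝ c (Set.Icc 0 1))
    (hc_mono : StrictMonoOn c (Set.Icc 0 1))
    (hc_conv : StrictConvexOn ℝ (Set.Icc 0 1) c)
    (hc0 : c 0 = 0) (hc'0 : 0 < deriv c 0)
    (hg1 : g 1 = 0) (hg_nonneg : ∀ k : ℕ, 1 ≤ k → 0 ≤ g k)
    (hδ : 1 < δ) :
    ∃ pstar : ℝ → ℝ,
      ContinuousOn pstar (Set.Icc 0 1) ∧
      (∀ s ∈ Set.Icc (0 : ℝ) 1, deriv c 0 * s ≤ pstar s ∧ pstar s ≤ c s) ∧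
      (∀ s ∈ Set.Icc (0 : ℝ) 1, Tmap c g δ pstar s = pstar s) ∧
      (∀ q : ℝ → ℝ, ContinuousOn q (Set.Icc 0 1) →
        (∀ s ∈ Set.Icc (0 : ℝ) 1, deriv c 0 * s ≤ q s ∧ q s ≤ c s) →
        (∀ s ∈ Set.Icc (0 : ℝ) 1, Tmap c g δ q s = q s) →
        Set.EqOn q pstar (Set.Icc 0 1)) := by
  have H : StandingAssumptions c g δ (deriv c 0) :=
    { one_lt := hδ
      pos := hc'0
      map_zero := hc0
      continuousOn := hc_diff.continuousOn
      monotoneOn := hc_mono.monotoneOn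
      convexOn := hc_conv.convexOn
      hasDerivWithinAt := (differentiableAt_of_deriv_ne_zero hc'0.ne').hasDerivAt.hasDerivWithinAt
      g_one := hg1
      g_nonneg := hg_nonneg }
  exact ⟨iInfIterate c g δ, H.continuousOn_iInfIterate, H.iInfIterate_mem,
    H.eqOn_Tmap_iInfIterate,
    fun q _ hq hTq => H.eqOn_of_eqOn_Tmap hq H.iInfIterate_mem hTq H.eqOn_Tmap_iInfIterate⟩

theorem unique_equilibrium_price (c : ℝ → ℝ) (g : ℕ → ℝ) (δ : ℝ)
(hc_diff : DifferentiableOn ℝ c (Set.Icc 0 1))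
    (hc_mono : StrictMonoOn c (Set.Icc 0 1))
    (hc_conv : StrictConvexOn ℝ (Set.Icc 0 1) c)
    (hc0 : c 0 = 0) (hc'0 : 0 < deriv c 0)
    (hg_mono : StrictMonoOn g {k : ℕ | 1 ≤ k})
    (hg1 : g 1 = 0) (hg_nonneg : ∀ k : ℕ, 1 ≤ k → 0 ≤ g k)
    (hg_top : Tendsto g atTop atTop)
    (hδ : 1 < δ) :
    ∃ pstar : ℝ → ℝ,
      ContinuousOn pstar (Set.Icc 0 1) ∧
      (∀ s ∈ Set.Icc (0 : ℝ) 1, deriv c 0 * s ≤ pstar s ∧ pstar s ≤ c s) ∧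
      (∀ s ∈ Set.Icc (0 : ℝ) 1, Tmap c g δ pstar s = pstar s) ∧
      (∀ q : ℝ → ℝ, ContinuousOn q (Set.Icc 0 1) →
        (∀ s ∈ Set.Icc (0 : ℝ) 1, deriv c 0 * s ≤ q s ∧ q s ≤ c s) →
        (∀ s ∈ Set.Icc (0 : ℝ) 1, Tmap c g δ q s = q s) →
        Set.EqOn q pstar (Set.Icc 0 1)) :=
  unique_equilibrium_price_general c g δ hc_diff hc_mono hc_conv hc0 hc'0 hg1 hg_nonneg hδ
end

section
/- For every continuous p : [0,1] → ℝ with p ≥ 0 pointwise, the function Tp is continuous on [0,1]. -/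
open Set Filter

/-!
Substituting `t = s * u` turns the infimum defining `Tp s` into an infimum over the fixed set
`{k ≥ 1} × [0, 1]`, of a function jointly continuous in `s` and `(k, u)` once `c` and `p` are
extended continuously off `[0, 1]`. Since `g k → ∞` while `p ≥ 0`, indices `k` beyond some `K`
never beat `k = 1, t = s`, so the infimum may be taken over the compact set `[1, K] × [0, 1]`,
and an infimum over a compact set of a jointly continuous function is continuous.
-/

noncomputable def splitCost (c : ℝ → ℝ) (g : ℕ → ℝ) (δ : ℝ) (p : ℝ → ℝ) (s : ℝ) (k : ℕ) (t : ℝ) :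
    ℝ :=
  c (s - t) + g k + δ * k * p (t / k)

theorem sub_mem_Icc_and_div_mem_Icc {s t : ℝ} {k : ℕ} (ht : 0 ≤ t) (hts : t ≤ s) (hs : s ≤ 1)
    (hk : 1 ≤ k) : s - t ∈ Icc (0 : ℝ) 1 ∧ t / k ∈ Icc (0 : ℝ) 1 := by
  have hk' : (1 : ℝ) ≤ k := by exact_mod_cast hk
  refine ⟨⟨by linarith, by linarith⟩, div_nonneg ht (by linarith), ?_⟩
  exact (div_le_self ht hk').trans (hts.trans hs)

section

variable {c c' : ℝ → ℝ} {g : ℕ → ℝ} {δ : ℝ} {p p' : ℝ → ℝ}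

theorem Tmap_eqOn_of_eqOn (hc : EqOn c c' (Icc 0 1)) (hp : EqOn p p' (Icc 0 1)) :
    EqOn (Tmap c g δ p) (Tmap c' g δ p') (Icc 0 1) := by
  intro s hs
  unfold Tmap
  congr 1
  ext y
  refine exists_congr fun k => exists_congr fun t => and_congr_right fun hk =>
    and_congr_right fun ht => and_congr_right fun hts => ?_
  obtain ⟨h₁, h₂⟩ := sub_mem_Icc_and_div_mem_Icc ht hts hs.2 hk
  rw [hc h₁, hp h₂]

theorem continuous_splitCost_mul (hc : Continuous c) (hp : Continuous p) :
    Continuous fun x : ℝ × (ℕ × ℝ) => splitCost c g δ p x.1 x.2.1 (x.1 * x.2.2) := by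
  -- `fun_prop` cannot treat `t / k` as a real division; `k⁻¹` is continuous as `ℕ` is discrete.
  have hk_inv : Continuous fun x : ℝ × (ℕ × ℝ) => (x.2.1 : ℝ)⁻¹ :=
    (continuous_of_discreteTopology (f := fun k : ℕ => (k : ℝ)⁻¹)).comp
      (continuous_fst.comp continuous_snd)
  simp only [splitCost, div_eq_mul_inv]
  fun_prop

theorem exists_splitCost_one_le (hc : ContinuousOn c (Icc 0 1)) (hp : ContinuousOn p (Icc 0 1))
    (hp0 : ∀ x ∈ Icc (0 : ℝ) 1, 0 ≤ p x) (hδ : 0 ≤ δ) (hg : Tendsto g atTop atTop) :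
    ∃ K : ℕ, 1 ≤ K ∧ ∀ s ∈ Icc (0 : ℝ) 1, ∀ k, K < k → ∀ t ∈ Icc 0 s,
      splitCost c g δ p s 1 s ≤ splitCost c g δ p s k t := by
  obtain ⟨M, hM⟩ := isCompact_Icc.exists_bound_of_continuousOn hc
  obtain ⟨C, hC⟩ := isCompact_Icc.exists_bound_of_continuousOn hp
  obtain ⟨K, hK⟩ := eventually_atTop.mp (hg.eventually_ge_atTop (2 * M + g 1 + δ * C))
  refine ⟨max K 1, le_max_right _ _, fun s hs k hk t ht => ?_⟩
  obtain ⟨hst, htk⟩ := sub_mem_Icc_and_div_mem_Icc ht.1 ht.2 hs.2 (le_of_max_le_right hk.le)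
  have hc0 : c (s - s) ≤ M := by
    simpa [sub_self] using (le_abs_self _).trans (hM 0 (left_mem_Icc.mpr zero_le_one))
  have hcst : -M ≤ c (s - t) := neg_le_of_abs_le (hM _ hst)
  have hps : δ * p s ≤ δ * C := mul_le_mul_of_nonneg_left ((le_abs_self _).trans (hC s hs)) hδ
  have hpk : 0 ≤ δ * k * p (t / k) := by have := hp0 _ htk; positivity
  have hgk := hK k (le_of_max_le_left hk.le)
  simp only [splitCost, Nat.cast_one, mul_one, div_one]
  linarith

theorem Tmap_eq_sInf_image (hc : Continuous c) (hp : Continuous p) {K : ℕ} (hK1 : 1 ≤ K)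
    {s : ℝ} (hs : 0 ≤ s)
    (hK : ∀ k, K < k → ∀ t ∈ Icc 0 s, splitCost c g δ p s 1 s ≤ splitCost c g δ p s k t) :
    Tmap c g δ p s =
      sInf ((fun x : ℕ × ℝ => splitCost c g δ p s x.1 (s * x.2)) '' Icc 1 K ×ˢ Icc 0 1) := by
  set f := fun x : ℕ × ℝ => splitCost c g δ p s x.1 (s * x.2)
  have hf : Continuous f :=
    (continuous_splitCost_mul hc hp).comp (continuous_const.prodMk continuous_id)
  have hcpt : IsCompact (f '' Icc 1 K ×ˢ Icc 0 1) :=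
    ((finite_Icc 1 K).isCompact.prod isCompact_Icc).image hf
  have hmem_image : ∀ k ∈ Icc 1 K, ∀ t ∈ Icc 0 s,
      splitCost c g δ p s k t ∈ f '' Icc 1 K ×ˢ Icc 0 1 := by
    intro k hk t ht
    refine ⟨(k, t / s), mk_mem_prod hk ⟨div_nonneg ht.1 hs, div_le_one_of_le₀ ht.2 hs⟩, ?_⟩
    rcases hs.eq_or_lt with rfl | hs'
    · simp [f, le_antisymm ht.2 ht.1]
    · simp [f, mul_div_cancel₀ _ hs'.ne']
  refine IsLeast.csInf_eq ⟨?_, ?_⟩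
  · obtain ⟨⟨k, u⟩, ⟨hk, hu⟩, hfx⟩ :=
      hcpt.sInf_mem (((nonempty_Icc.mpr hK1).prod (nonempty_Icc.mpr zero_le_one)).image f)
    exact ⟨k, s * u, hk.1, mul_nonneg hs hu.1, mul_le_of_le_one_right hs hu.2, hfx.symm⟩
  · rintro y ⟨k, t, hk, ht, hts, rfl⟩
    rcases le_or_gt k K with hkK | hKk
    · exact csInf_le hcpt.bddBelow (hmem_image k ⟨hk, hkK⟩ t ⟨ht, hts⟩)
    · exact (csInf_le hcpt.bddBelow (hmem_image 1 ⟨le_rfl, hK1⟩ s ⟨hs, le_rfl⟩)).trans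
        (hK k hKk t ⟨ht, hts⟩)

theorem continuousOn_Tmap_of_continuous (hc : Continuous c) (hp : Continuous p)
    (hp0 : ∀ x ∈ Icc (0 : ℝ) 1, 0 ≤ p x) (hδ : 0 ≤ δ) (hg : Tendsto g atTop atTop) :
    ContinuousOn (Tmap c g δ p) (Icc 0 1) := by
  obtain ⟨K, hK1, hK⟩ :=
    exists_splitCost_one_le hc.continuousOn hp.continuousOn hp0 hδ hg
  have hcont : Continuous fun s =>
      sInf ((fun x : ℕ × ℝ => splitCost c g δ p s x.1 (s * x.2)) '' Icc 1 K ×ˢ Icc 0 1) :=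
    ((finite_Icc 1 K).isCompact.prod isCompact_Icc).continuous_sInf
      (continuous_splitCost_mul hc hp)
  exact hcont.continuousOn.congr fun s hs => Tmap_eq_sInf_image hc hp hK1 hs.1 (hK s hs)

end

theorem Tmap_continuousOn_general (c : ℝ → ℝ) (g : ℕ → ℝ) (δ : ℝ)
(hc_diff : DifferentiableOn ℝ c (Set.Icc 0 1))
    (hg_top : Tendsto g atTop atTop)
    (hδ : 1 < δ) :
    ∀ p : ℝ → ℝ, ContinuousOn p (Set.Icc 0 1) →
      (∀ s ∈ Set.Icc (0 : ℝ) 1, 0 ≤ p s) →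
      ContinuousOn (Tmap c g δ p) (Set.Icc 0 1) := by
  intro p hp hp0
  have hc_ext : EqOn c (IccExtend zero_le_one ((Icc 0 1).domRestrict c)) (Icc 0 1) :=
    fun x hx => (IccExtend_of_mem zero_le_one ((Icc 0 1).domRestrict c) hx).symm
  have hp_ext : EqOn p (IccExtend zero_le_one ((Icc 0 1).domRestrict p)) (Icc 0 1) :=
    fun x hx => (IccExtend_of_mem zero_le_one ((Icc 0 1).domRestrict p) hx).symm
  refine (continuousOn_Tmap_of_continuous hc_diff.continuousOn.domRestrict.Icc_extend'
    hp.domRestrict.Icc_extend' (fun x hx => hp_ext hx ▸ hp0 x hx) (by linarith) hg_top).congr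
    (Tmap_eqOn_of_eqOn hc_ext hp_ext)

theorem Tmap_continuousOn (c : ℝ → ℝ) (g : ℕ → ℝ) (δ : ℝ)
(hc_diff : DifferentiableOn ℝ c (Set.Icc 0 1))
    (hc_mono : StrictMonoOn c (Set.Icc 0 1))
    (hc_conv : StrictConvexOn ℝ (Set.Icc 0 1) c)
    (hc0 : c 0 = 0) (hc'0 : 0 < deriv c 0)
    (hg_mono : StrictMonoOn g {k : ℕ | 1 ≤ k})
    (hg1 : g 1 = 0) (hg_nonneg : ∀ k : ℕ, 1 ≤ k → 0 ≤ g k)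
    (hg_top : Tendsto g atTop atTop)
    (hδ : 1 < δ) :
    ∀ p : ℝ → ℝ, ContinuousOn p (Set.Icc 0 1) →
      (∀ s ∈ Set.Icc (0 : ℝ) 1, 0 ≤ p s) →
      ContinuousOn (Tmap c g δ p) (Set.Icc 0 1) :=
  Tmap_continuousOn_general c g δ hc_diff hg_top hδ
end

section
/- There exists a natural number k̄ ≥ 1 such that for every continuous p : [0,1] → ℝ with 0 ≤ p(s) ≤ c(s) for all s, and every s ∈ [0,1], the infimum defining (Tp)(s) is attained: there exist k ∈ ℕ with 1 ≤ k ≤ k̄ and t ∈ [0, s] such that (Tp)(s) = c(s − t) + g(k) + δ·k·p(t/k); in particular (Tp)(s) equals the infimum of c(s − t) + g(k) + δ·k·p(t/k) restricted to 1 ≤ k ≤ k̄ and t ∈ [0, s]. -/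
open Set Filter

theorem Tmap_inf_attained (c : ℝ → ℝ) (g : ℕ → ℝ) (δ : ℝ)
(hc_diff : DifferentiableOn ℝ c (Set.Icc 0 1))
    (hc_mono : StrictMonoOn c (Set.Icc 0 1))
    (hc_conv : StrictConvexOn ℝ (Set.Icc 0 1) c)
    (hc0 : c 0 = 0) (hc'0 : 0 < deriv c 0)
    (hg_mono : StrictMonoOn g {k : ℕ | 1 ≤ k})
    (hg1 : g 1 = 0) (hg_nonneg : ∀ k : ℕ, 1 ≤ k → 0 ≤ g k)
    (hg_top : Tendsto g atTop atTop)
    (hδ : 1 < δ) :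
    ∃ kbar : ℕ, 1 ≤ kbar ∧
      ∀ p : ℝ → ℝ, ContinuousOn p (Set.Icc 0 1) →
        (∀ s ∈ Set.Icc (0 : ℝ) 1, 0 ≤ p s ∧ p s ≤ c s) →
        ∀ s ∈ Set.Icc (0 : ℝ) 1,
          (∃ k : ℕ, ∃ t : ℝ, 1 ≤ k ∧ k ≤ kbar ∧ 0 ≤ t ∧ t ≤ s ∧
            Tmap c g δ p s = c (s - t) + g k + δ * k * p (t / k)) ∧
          Tmap c g δ p s =
            sInf {y : ℝ | ∃ k : ℕ, ∃ t : ℝ, 1 ≤ k ∧ k ≤ kbar ∧ 0 ≤ t ∧ t ≤ s ∧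
              y = c (s - t) + g k + δ * k * p (t / k)} := by
  have hδ0 : (0:ℝ) ≤ δ := le_of_lt (lt_trans one_pos hδ)
  obtain ⟨N, hN⟩ := (hg_top.eventually_ge_atTop (c 1 + 1)).exists_forall_of_atTop
  refine ⟨max N 1, le_max_right _ _, ?_⟩
  intro p hpc hp s hs
  obtain ⟨hs0, hs1⟩ := hs
  have hp0 : p 0 = 0 :=
    le_antisymm (by simpa [hc0] using (hp 0 ⟨le_refl 0, zero_le_one⟩).2)
      (hp 0 ⟨le_refl 0, zero_le_one⟩).1
  set kbar := max N 1 with hkbar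
  set f : ℕ → ℝ → ℝ := fun k t => c (s - t) + g k + δ * k * p (t / k) with hf
  set Sfull := {y : ℝ | ∃ k : ℕ, ∃ t : ℝ, 1 ≤ k ∧ 0 ≤ t ∧ t ≤ s ∧ y = f k t} with hSfull
  set Sres := {y : ℝ | ∃ k : ℕ, ∃ t : ℝ, 1 ≤ k ∧ k ≤ kbar ∧ 0 ≤ t ∧ t ≤ s ∧ y = f k t}
    with hSres
  have hcmono := hc_mono.monotoneOn
  -- nonnegativity of terms
  have hfnn : ∀ k : ℕ, ∀ t : ℝ, 1 ≤ k → 0 ≤ t → t ≤ s → 0 ≤ f k t := by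
    intro k t hk ht0 hts
    have hk1 : (1:ℝ) ≤ (k:ℝ) := by exact_mod_cast hk
    have h1 : (0:ℝ) ≤ s - t := by linarith
    have h2 : s - t ≤ 1 := by linarith
    have hcst : 0 ≤ c (s - t) := by
      have := hcmono (a := 0) (b := s - t) ⟨le_rfl, zero_le_one⟩ ⟨h1, h2⟩ h1
      linarith [this, hc0.ge]
    have htk0 : 0 ≤ t / (k:ℝ) := div_nonneg ht0 (by linarith)
    have htk1 : t / (k:ℝ) ≤ 1 := by
      rw [div_le_one (by linarith)]; linarith
    have hpk : 0 ≤ p (t / k) := (hp _ ⟨htk0, htk1⟩).1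
    have : 0 ≤ δ * (k:ℝ) * p (t / k) := by positivity
    have hgk := hg_nonneg k hk
    simp only [hf]
    linarith
  have hcs_mem : c s ∈ Sres := by
    refine ⟨1, 0, le_rfl, le_max_right _ _, le_rfl, hs0, ?_⟩
    simp [hf, hg1, hp0]
  have hsub : Sres ⊆ Sfull := by
    rintro y ⟨k, t, hk, _, ht0, hts, hy⟩
    exact ⟨k, t, hk, ht0, hts, hy⟩
  have hSres_ne : Sres.Nonempty := ⟨c s, hcs_mem⟩
  have hSfull_ne : Sfull.Nonempty := ⟨c s, hsub hcs_mem⟩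
  have hlb : ∀ y ∈ Sfull, (0:ℝ) ≤ y := by
    rintro y ⟨k, t, hk, ht0, hts, rfl⟩
    exact hfnn k t hk ht0 hts
  have hbdd_full : BddBelow Sfull := ⟨0, hlb⟩
  have hbdd_res : BddBelow Sres := hbdd_full.mono hsub
  -- continuity
  have hcont : ∀ k : ℕ, 1 ≤ k → ContinuousOn (f k) (Icc 0 s) := by
    intro k hk
    have hk1 : (1:ℝ) ≤ (k:ℝ) := by exact_mod_cast hk
    have hck : ContinuousOn (fun t => c (s - t)) (Icc 0 s) := by
      refine hc_diff.continuousOn.comp (continuous_const.sub continuous_id).continuousOn ?_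
      intro t ht
      exact ⟨by simp; linarith [ht.2], by simp; linarith [ht.1]⟩
    have hpk : ContinuousOn (fun t => p (t / (k:ℝ))) (Icc 0 s) := by
      refine hpc.comp (continuous_id.div_const _).continuousOn ?_
      intro t ht
      refine ⟨div_nonneg ht.1 (by linarith), ?_⟩
      rw [div_le_one (by linarith)]
      linarith [ht.2]
    exact (hck.add continuousOn_const).add (continuousOn_const.mul hpk)
  -- Sres is compact
  have hSres_eq : Sres = ⋃ k ∈ Finset.Icc 1 kbar, f k '' Icc 0 s := by
    ext y
    simp only [hSres, mem_setOf_eq, Set.mem_iUnion, Finset.mem_Icc, Set.mem_image,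
      Set.mem_Icc]
    constructor
    · rintro ⟨k, t, hk, hkb, ht0, hts, rfl⟩
      exact ⟨k, ⟨hk, hkb⟩, t, ⟨ht0, hts⟩, rfl⟩
    · rintro ⟨k, ⟨hk, hkb⟩, t, ⟨ht0, hts⟩, rfl⟩
      exact ⟨k, t, hk, hkb, ht0, hts, rfl⟩
  have hScompact : IsCompact Sres := by
    rw [hSres_eq]
    exact (Finset.Icc 1 kbar).isCompact_biUnion fun k hk =>
      isCompact_Icc.image_of_continuousOn (hcont k (Finset.mem_Icc.mp hk).1)
  -- sInf equality
  have hcs1 : c s ≤ c 1 := hcmono ⟨hs0, hs1⟩ ⟨zero_le_one, le_rfl⟩ hs1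
  have hinf_eq : sInf Sfull = sInf Sres := by
    refine le_antisymm (csInf_le_csInf hbdd_full hSres_ne hsub) ?_
    refine le_csInf hSfull_ne ?_
    rintro y ⟨k, t, hk, ht0, hts, rfl⟩
    by_cases hkb : k ≤ kbar
    · exact csInf_le hbdd_res ⟨k, t, hk, hkb, ht0, hts, rfl⟩
    · have hkN : N ≤ k := le_trans (le_max_left N 1) (le_of_lt (lt_of_not_ge hkb))
      have hgk : c 1 + 1 ≤ g k := hN k hkN
      have hk1 : (1:ℝ) ≤ (k:ℝ) := by exact_mod_cast hk
      have h1 : (0:ℝ) ≤ s - t := by linarith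
      have h2 : s - t ≤ 1 := by linarith
      have hcst : 0 ≤ c (s - t) := by
        have := hcmono (a := 0) (b := s - t) ⟨le_rfl, zero_le_one⟩ ⟨h1, h2⟩ h1
        linarith [this, hc0.ge]
      have htk0 : 0 ≤ t / (k:ℝ) := div_nonneg ht0 (by linarith)
      have htk1 : t / (k:ℝ) ≤ 1 := by rw [div_le_one (by linarith)]; linarith
      have hpk : 0 ≤ p (t / k) := (hp _ ⟨htk0, htk1⟩).1
      have hdk : 0 ≤ δ * (k:ℝ) * p (t / k) := by positivity
      have hle : c s ≤ f k t := by simp only [hf]; linarith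
      exact le_trans (csInf_le hbdd_res hcs_mem) hle
  have hmem : sInf Sres ∈ Sres := hScompact.sInf_mem hSres_ne
  have hT : Tmap c g δ p s = sInf Sres := by
    rw [Tmap]; exact hinf_eq
  obtain ⟨k, t, hk, hkb, ht0, hts, hy⟩ := hmem
  exact ⟨⟨k, t, hk, hkb, ht0, hts, by rw [hT, hy]⟩, hT⟩
end

section
/- The operator T is increasing and concave on nonnegative continuous functions: (i) if p, q : [0,1] → ℝ are continuous with 0 ≤ p(s) ≤ q(s) for all s, then (Tp)(s) ≤ (Tq)(s) for all s; (ii) if p, q : [0,1] → ℝ are continuous and nonnegative and α ∈ [0,1], then T(α·p + (1−α)·q)(s) ≥ α·(Tp)(s) + (1−α)·(Tq)(s) for all s ∈ [0,1]. -/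
open Set Filter

lemma Tset_nonempty (c : ℝ → ℝ) (g : ℕ → ℝ) (δ : ℝ) (p : ℝ → ℝ) {s : ℝ} (hs : 0 ≤ s) :
    {y : ℝ | ∃ k : ℕ, ∃ t : ℝ, 1 ≤ k ∧ 0 ≤ t ∧ t ≤ s ∧
      y = c (s - t) + g k + δ * k * p (t / k)}.Nonempty :=
  ⟨c (s - 0) + g 1 + δ * (1:ℕ) * p (0 / (1:ℕ)), 1, 0, le_refl 1, le_refl 0, hs, by norm_num⟩

lemma tk_mem {t s : ℝ} {k : ℕ} (hk : 1 ≤ k) (ht0 : 0 ≤ t) (hts : t ≤ s) (hs1 : s ≤ 1) :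
    t / k ∈ Set.Icc (0 : ℝ) 1 := by
  have hk' : (1 : ℝ) ≤ k := by exact_mod_cast hk
  have hkpos : (0:ℝ) < k := by linarith
  constructor
  · positivity
  · rw [div_le_one hkpos]
    calc t ≤ 1 := hts.trans hs1
      _ ≤ k := hk'

lemma Tset_elem_nonneg (c : ℝ → ℝ) (g : ℕ → ℝ) {δ : ℝ} (p : ℝ → ℝ)
    (hc_mono : StrictMonoOn c (Set.Icc 0 1)) (hc0 : c 0 = 0)
    (hg_nonneg : ∀ k : ℕ, 1 ≤ k → 0 ≤ g k) (hδ : 1 < δ)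
    (hp : ∀ x ∈ Set.Icc (0 : ℝ) 1, 0 ≤ p x)
    {s : ℝ} (hs : s ∈ Set.Icc (0 : ℝ) 1) :
    ∀ y ∈ {y : ℝ | ∃ k : ℕ, ∃ t : ℝ, 1 ≤ k ∧ 0 ≤ t ∧ t ≤ s ∧
      y = c (s - t) + g k + δ * k * p (t / k)}, 0 ≤ y := by
  rintro y ⟨k, t, hk, ht0, hts, rfl⟩
  have hst : s - t ∈ Set.Icc (0 : ℝ) 1 :=
    ⟨by linarith, by linarith [hs.2]⟩
  have h1 : 0 ≤ c (s - t) := by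
    rcases eq_or_lt_of_le hst.1 with h | h
    · rw [← h, hc0]
    · have := hc_mono (by constructor <;> norm_num) hst h
      linarith [hc0 ▸ this]
  have h2 : 0 ≤ g k := hg_nonneg k hk
  have h3 : 0 ≤ δ * k * p (t / k) := by
    have := hp (t / k) (tk_mem hk ht0 hts hs.2)
    positivity
  linarith

theorem Tmap_increasing_concave (c : ℝ → ℝ) (g : ℕ → ℝ) (δ : ℝ)
(hc_diff : DifferentiableOn ℝ c (Set.Icc 0 1))
    (hc_mono : StrictMonoOn c (Set.Icc 0 1))
    (hc_conv : StrictConvexOn ℝ (Set.Icc 0 1) c)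
    (hc0 : c 0 = 0) (hc'0 : 0 < deriv c 0)
    (hg_mono : StrictMonoOn g {k : ℕ | 1 ≤ k})
    (hg1 : g 1 = 0) (hg_nonneg : ∀ k : ℕ, 1 ≤ k → 0 ≤ g k)
    (hg_top : Tendsto g atTop atTop)
    (hδ : 1 < δ) :
    (∀ p q : ℝ → ℝ, ContinuousOn p (Set.Icc 0 1) → ContinuousOn q (Set.Icc 0 1) →
      (∀ s ∈ Set.Icc (0 : ℝ) 1, 0 ≤ p s ∧ p s ≤ q s) →
      ∀ s ∈ Set.Icc (0 : ℝ) 1, Tmap c g δ p s ≤ Tmap c g δ q s) ∧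
    (∀ p q : ℝ → ℝ, ContinuousOn p (Set.Icc 0 1) → ContinuousOn q (Set.Icc 0 1) →
      (∀ s ∈ Set.Icc (0 : ℝ) 1, 0 ≤ p s) → (∀ s ∈ Set.Icc (0 : ℝ) 1, 0 ≤ q s) →
      ∀ α : ℝ, α ∈ Set.Icc (0 : ℝ) 1 →
        ∀ s ∈ Set.Icc (0 : ℝ) 1,
          α * Tmap c g δ p s + (1 - α) * Tmap c g δ q s ≤
            Tmap c g δ (fun x => α * p x + (1 - α) * q x) s) := by
  constructor
  · intro p q hp hq hpq s hs
    apply le_csInf (Tset_nonempty c g δ q hs.1)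
    rintro y ⟨k, t, hk, ht0, hts, rfl⟩
    have hbdd : BddBelow {y : ℝ | ∃ k : ℕ, ∃ t : ℝ, 1 ≤ k ∧ 0 ≤ t ∧ t ≤ s ∧
        y = c (s - t) + g k + δ * k * p (t / k)} :=
      ⟨0, fun y hy => Tset_elem_nonneg c g p hc_mono hc0 hg_nonneg hδ
        (fun x hx => (hpq x hx).1) hs y hy⟩
    have hmem : c (s - t) + g k + δ * k * p (t / k) ∈ {y : ℝ | ∃ k : ℕ, ∃ t : ℝ,
        1 ≤ k ∧ 0 ≤ t ∧ t ≤ s ∧ y = c (s - t) + g k + δ * k * p (t / k)} :=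
      ⟨k, t, hk, ht0, hts, rfl⟩
    refine (csInf_le hbdd hmem).trans ?_
    have := (hpq (t / k) (tk_mem hk ht0 hts hs.2)).2
    have hδk : (0 : ℝ) ≤ δ * k := by positivity
    nlinarith
  · intro p q hp hq hp0 hq0 α hα s hs
    rw [show Tmap c g δ (fun x => α * p x + (1 - α) * q x) s = sInf {y : ℝ | ∃ k : ℕ, ∃ t : ℝ,
        1 ≤ k ∧ 0 ≤ t ∧ t ≤ s ∧ y = c (s - t) + g k + δ * k * (α * p (t / k) + (1 - α) * q (t / k))}
      from rfl]
    refine le_csInf ⟨c (s - 0) + g 1 + δ * ((1:ℕ):ℝ) * (α * p (0 / ((1:ℕ):ℝ)) +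
      (1 - α) * q (0 / ((1:ℕ):ℝ))), 1, 0, le_refl 1, le_refl 0, hs.1, rfl⟩ ?_
    rintro y ⟨k, t, hk, ht0, hts, rfl⟩
    have hbp : BddBelow {y : ℝ | ∃ k : ℕ, ∃ t : ℝ, 1 ≤ k ∧ 0 ≤ t ∧ t ≤ s ∧
        y = c (s - t) + g k + δ * k * p (t / k)} :=
      ⟨0, fun y hy => Tset_elem_nonneg c g p hc_mono hc0 hg_nonneg hδ hp0 hs y hy⟩
    have hbq : BddBelow {y : ℝ | ∃ k : ℕ, ∃ t : ℝ, 1 ≤ k ∧ 0 ≤ t ∧ t ≤ s ∧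
        y = c (s - t) + g k + δ * k * q (t / k)} :=
      ⟨0, fun y hy => Tset_elem_nonneg c g q hc_mono hc0 hg_nonneg hδ hq0 hs y hy⟩
    have h1 : Tmap c g δ p s ≤ c (s - t) + g k + δ * k * p (t / k) :=
      csInf_le hbp ⟨k, t, hk, ht0, hts, rfl⟩
    have h2 : Tmap c g δ q s ≤ c (s - t) + g k + δ * k * q (t / k) :=
      csInf_le hbq ⟨k, t, hk, ht0, hts, rfl⟩
    have hα1 : 0 ≤ 1 - α := by linarith [hα.2]
    nlinarith [hα.1, mul_le_mul_of_nonneg_left h1 hα.1, mul_le_mul_of_nonneg_left h2 hα1]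
end

section
/- (Du's fixed point theorem, specialized to C([0,1]).) Let u0, v0 : [0,1] → ℝ be continuous with u0(s) ≤ v0(s) for all s and u0 ≠ v0, and let [u0, v0] denote the set of continuous p : [0,1] → ℝ with u0 ≤ p ≤ v0 pointwise. Let A : [u0, v0] → C([0,1]) be an operator that is increasing (p ≤ q pointwise implies A p ≤ A q pointwise) and concave (for p ≤ q in [u0, v0] and α ∈ [0,1], A(α·p + (1−α)·q) ≥ α·A p + (1−α)·A q pointwise). Suppose there exists ε ∈ (0,1] with A u0 ≥ u0 + ε·(v0 − u0) pointwise and A v0 ≤ v0 pointwise. Then A has a unique fixed point x* in [u0, v0], and for every x0 ∈ [u0, v0] the iterates A^n x0 converge uniformly to x* as n → ∞. -/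
open Set Filter Topology

/-!
The iterates `uₙ = Aⁿ u₀` increase, `vₙ = Aⁿ v₀` decrease, and by monotonicity the `n`-th
iterate of any point of `[u₀, v₀]` lies between them. With `t = (1 - ε)ⁿ`, the point
`t u₀ + (1 - t) vₙ` lies below `uₙ`, so monotonicity, concavity and `A u₀ ≥ u₀ + ε (v₀ - u₀)`
give `vₙ₊₁ - uₙ₊₁ ≤ (1 - ε) t (vₙ₊₁ - u₀)`. Hence `vₙ - uₙ ≤ (1 - ε)ⁿ (v₀ - u₀)` tends to zero
uniformly, which squeezes everything lying between all `uₙ` and `vₙ` onto a single continuous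
function: the unique fixed point, and the uniform limit of every orbit.
-/

def LeOn {α β : Type*} [LE β] (I : Set α) (f g : α → β) : Prop :=
  ∀ s ∈ I, f s ≤ g s

theorem LeOn.trans {α β : Type*} [Preorder β] {I : Set α} {f g h : α → β}
    (hfg : LeOn I f g) (hgh : LeOn I g h) : LeOn I f h :=
  fun s hs => (hfg s hs).trans (hgh s hs)

section Squeeze

variable {ι X : Type*} {l : Filter ι} {I : Set X} {u v : ι → X → ℝ} {c : ι → ℝ}

theorem tendstoUniformlyOn_of_squeeze (hc : Tendsto c l (𝓝 0))
    (hgap : ∀ i, ∀ s ∈ I, v i s - u i s ≤ c i) {f : ι → X → ℝ} {g : X → ℝ}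
    (hf : ∀ i, LeOn I (u i) (f i) ∧ LeOn I (f i) (v i))
    (hg : ∀ i, LeOn I (u i) g ∧ LeOn I g (v i)) :
    TendstoUniformlyOn f g l I := by
  rw [Metric.tendstoUniformlyOn_iff]
  intro δ hδ
  filter_upwards [hc.eventually (gt_mem_nhds hδ)] with i hi s hs
  have := hgap i s hs
  have := (hf i).1 s hs
  have := (hf i).2 s hs
  have := (hg i).1 s hs
  have := (hg i).2 s hs
  rw [Real.dist_eq, abs_lt]
  constructor <;> linarith

theorem eqOn_of_squeeze [l.NeBot] (hc : Tendsto c l (𝓝 0))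
    (hgap : ∀ i, ∀ s ∈ I, v i s - u i s ≤ c i) {p q : X → ℝ}
    (hp : ∀ i, LeOn I (u i) p ∧ LeOn I p (v i))
    (hq : ∀ i, LeOn I (u i) q ∧ LeOn I q (v i)) :
    EqOn p q I := fun _ hs =>
  tendsto_nhds_unique tendsto_const_nhds
    ((tendstoUniformlyOn_of_squeeze hc hgap (f := fun _ => p) hp hq).tendsto_at hs)

end Squeeze

section DuOperator

variable {X : Type*} [TopologicalSpace X]

def orderIntervalOn (I : Set X) (u v : X → ℝ) : Set (X → ℝ) :=
  {p | ContinuousOn p I ∧ ∀ s ∈ I, u s ≤ p s ∧ p s ≤ v s}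

structure IsDuOperator (I : Set X) (u₀ v₀ : X → ℝ) (ε : ℝ) (A : (X → ℝ) → X → ℝ) :
    Prop where
  continuousOn_left : ContinuousOn u₀ I
  continuousOn_right : ContinuousOn v₀ I
  left_le_right : LeOn I u₀ v₀
  continuousOn_apply : ∀ p ∈ orderIntervalOn I u₀ v₀, ContinuousOn (A p) I
  mono : ∀ p ∈ orderIntervalOn I u₀ v₀, ∀ q ∈ orderIntervalOn I u₀ v₀,
    LeOn I p q → LeOn I (A p) (A q)
  concave : ∀ p ∈ orderIntervalOn I u₀ v₀, ∀ q ∈ orderIntervalOn I u₀ v₀, LeOn I p q →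
    ∀ α ∈ Icc (0 : ℝ) 1, ∀ s ∈ I,
      α * A p s + (1 - α) * A q s ≤ A (fun x => α * p x + (1 - α) * q x) s
  eps_pos : 0 < ε
  eps_le_one : ε ≤ 1
  le_apply_left : ∀ s ∈ I, u₀ s + ε * (v₀ s - u₀ s) ≤ A u₀ s
  apply_right_le : LeOn I (A v₀) v₀

namespace IsDuOperator

variable {I : Set X} {u₀ v₀ : X → ℝ} {ε : ℝ} {A : (X → ℝ) → X → ℝ}

local notation "𝒟" => orderIntervalOn I u₀ v₀

theorem left_mem (h : IsDuOperator I u₀ v₀ ε A) : u₀ ∈ 𝒟 :=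
  ⟨h.continuousOn_left, fun s hs => ⟨le_rfl, h.left_le_right s hs⟩⟩

theorem right_mem (h : IsDuOperator I u₀ v₀ ε A) : v₀ ∈ 𝒟 :=
  ⟨h.continuousOn_right, fun s hs => ⟨h.left_le_right s hs, le_rfl⟩⟩

theorem one_sub_mem_Ico (h : IsDuOperator I u₀ v₀ ε A) : 1 - ε ∈ Ico (0 : ℝ) 1 :=
  ⟨by linarith [h.eps_le_one], by linarith [h.eps_pos]⟩

theorem left_le_apply_left (h : IsDuOperator I u₀ v₀ ε A) : LeOn I u₀ (A u₀) := fun s hs => by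
  have := h.le_apply_left s hs
  have := mul_nonneg h.eps_pos.le (sub_nonneg.2 (h.left_le_right s hs))
  linarith

theorem mapsTo (h : IsDuOperator I u₀ v₀ ε A) : MapsTo A 𝒟 𝒟 := fun p hp => by
  have hu := h.left_le_apply_left.trans (h.mono _ h.left_mem _ hp fun s hs => (hp.2 s hs).1)
  have hv := (h.mono _ hp _ h.right_mem fun s hs => (hp.2 s hs).2).trans h.apply_right_le
  exact ⟨h.continuousOn_apply p hp, fun s hs => ⟨hu s hs, hv s hs⟩⟩

theorem iterate_mono (h : IsDuOperator I u₀ v₀ ε A) (n : ℕ) {p q : X → ℝ} (hp : p ∈ 𝒟)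
    (hq : q ∈ 𝒟) (hpq : LeOn I p q) : LeOn I (A^[n] p) (A^[n] q) := by
  induction n with
  | zero => exact hpq
  | succ n ih =>
    rw [Function.iterate_succ_apply', Function.iterate_succ_apply']
    exact h.mono _ (h.mapsTo.iterate n hp) _ (h.mapsTo.iterate n hq) ih

theorem iterate_left_mem (h : IsDuOperator I u₀ v₀ ε A) (n : ℕ) : A^[n] u₀ ∈ 𝒟 :=
  h.mapsTo.iterate n h.left_mem

theorem iterate_right_mem (h : IsDuOperator I u₀ v₀ ε A) (n : ℕ) : A^[n] v₀ ∈ 𝒟 :=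
  h.mapsTo.iterate n h.right_mem

theorem iterate_between (h : IsDuOperator I u₀ v₀ ε A) {p : X → ℝ} (hp : p ∈ 𝒟) (n : ℕ) :
    LeOn I (A^[n] u₀) (A^[n] p) ∧ LeOn I (A^[n] p) (A^[n] v₀) :=
  ⟨h.iterate_mono n h.left_mem hp fun s hs => (hp.2 s hs).1,
    h.iterate_mono n hp h.right_mem fun s hs => (hp.2 s hs).2⟩

theorem monotone_iterate_left (h : IsDuOperator I u₀ v₀ ε A) {s : X} (hs : s ∈ I) :
    Monotone fun n => A^[n] u₀ s := by
  refine monotone_nat_of_le_succ fun n => ?_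
  rw [Function.iterate_succ_apply]
  exact h.iterate_mono n h.left_mem (h.mapsTo h.left_mem) h.left_le_apply_left s hs

theorem antitone_iterate_right (h : IsDuOperator I u₀ v₀ ε A) {s : X} (hs : s ∈ I) :
    Antitone fun n => A^[n] v₀ s := by
  refine antitone_nat_of_succ_le fun n => ?_
  rw [Function.iterate_succ_apply]
  exact h.iterate_mono n (h.mapsTo h.right_mem) h.right_mem h.apply_right_le s hs

theorem iterate_left_le_iterate_right (h : IsDuOperator I u₀ v₀ ε A) (m n : ℕ) :
    LeOn I (A^[m] u₀) (A^[n] v₀) := fun s hs => by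
  have hn := (h.iterate_between h.left_mem n).2 s hs
  have hm := (h.iterate_between h.left_mem m).2 s hs
  rcases le_total m n with hmn | hnm
  · exact (h.monotone_iterate_left hs hmn).trans hn
  · exact hm.trans (h.antitone_iterate_right hs hnm)

theorem iterate_gap_le (h : IsDuOperator I u₀ v₀ ε A) (n : ℕ) :
    ∀ s ∈ I, A^[n] v₀ s - A^[n] u₀ s ≤ (1 - ε) ^ n * (A^[n] v₀ s - u₀ s) := by
  induction n with
  | zero => simp
  | succ n ih =>
    set t := (1 - ε) ^ n
    have ht : t ∈ Icc (0 : ℝ) 1 :=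
      ⟨pow_nonneg h.one_sub_mem_Ico.1 n, pow_le_one₀ h.one_sub_mem_Ico.1 h.one_sub_mem_Ico.2.le⟩
    have hvn := h.iterate_right_mem n
    have hu_v : LeOn I u₀ (A^[n] v₀) := fun s hs => (hvn.2 s hs).1
    set w : X → ℝ := fun x => t * u₀ x + (1 - t) * A^[n] v₀ x
    have hw : w ∈ 𝒟 := by
      refine ⟨(continuousOn_const.mul h.continuousOn_left).add (continuousOn_const.mul hvn.1),
        fun s hs => ⟨?_, ?_⟩⟩
      · nlinarith [hu_v s hs, ht.2]
      · nlinarith [(hvn.2 s hs).2, h.left_le_right s hs, ht.1, ht.2]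
    have hw_le : LeOn I w (A^[n] u₀) := fun s hs => by
      have := ih s hs
      simp only [w]
      linarith
    intro s hs
    have hmono := h.mono _ hw _ (h.iterate_left_mem n) hw_le s hs
    have hconc := h.concave _ h.left_mem _ hvn hu_v t ht s hs
    have hAu₀ := mul_le_mul_of_nonneg_left (h.le_apply_left s hs) ht.1
    have hv_le := mul_le_mul_of_nonneg_left (((h.iterate_right_mem (n + 1)).2 s hs).2)
      (mul_nonneg ht.1 h.eps_pos.le)
    rw [Function.iterate_succ_apply', Function.iterate_succ_apply', pow_succ] at *
    linarith

theorem exists_iterate_gap_tendsto_zero (h : IsDuOperator I u₀ v₀ ε A) (hI : IsCompact I) :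
    ∃ c : ℕ → ℝ, Tendsto c atTop (𝓝 0) ∧ ∀ n, ∀ s ∈ I, A^[n] v₀ s - A^[n] u₀ s ≤ c n := by
  obtain ⟨M, hM⟩ :=
    hI.exists_bound_of_continuousOn (h.continuousOn_right.sub h.continuousOn_left)
  obtain ⟨hr, hr_lt⟩ := h.one_sub_mem_Ico
  refine ⟨fun n => (1 - ε) ^ n * M, ?_, fun n s hs => ?_⟩
  · simpa using (tendsto_pow_atTop_nhds_zero_of_lt_one hr hr_lt).mul_const M
  · calc A^[n] v₀ s - A^[n] u₀ s ≤ (1 - ε) ^ n * (A^[n] v₀ s - u₀ s) := h.iterate_gap_le n s hs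
      _ ≤ (1 - ε) ^ n * M := by
        refine mul_le_mul_of_nonneg_left ?_ (pow_nonneg hr n)
        have := ((h.iterate_right_mem n).2 s hs).2
        have := (le_abs_self (v₀ s - u₀ s)).trans (hM s hs)
        linarith

theorem tendstoUniformlyOn_of_between (h : IsDuOperator I u₀ v₀ ε A) (hI : IsCompact I)
    {f : ℕ → X → ℝ} {g : X → ℝ} (hf : ∀ n, LeOn I (A^[n] u₀) (f n) ∧ LeOn I (f n) (A^[n] v₀))
    (hg : ∀ n, LeOn I (A^[n] u₀) g ∧ LeOn I g (A^[n] v₀)) :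
    TendstoUniformlyOn f g atTop I :=
  have ⟨_, hc, hgap⟩ := h.exists_iterate_gap_tendsto_zero hI
  tendstoUniformlyOn_of_squeeze hc hgap hf hg

theorem eqOn_of_between (h : IsDuOperator I u₀ v₀ ε A) (hI : IsCompact I) {p q : X → ℝ}
    (hp : ∀ n, LeOn I (A^[n] u₀) p ∧ LeOn I p (A^[n] v₀))
    (hq : ∀ n, LeOn I (A^[n] u₀) q ∧ LeOn I q (A^[n] v₀)) :
    EqOn p q I :=
  have ⟨_, hc, hgap⟩ := h.exists_iterate_gap_tendsto_zero hI
  eqOn_of_squeeze hc hgap hp hq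

theorem apply_between (h : IsDuOperator I u₀ v₀ ε A) {p : X → ℝ} (hp : p ∈ 𝒟) {n : ℕ}
    (hpn : LeOn I (A^[n] u₀) p ∧ LeOn I p (A^[n] v₀)) :
    LeOn I (A^[n + 1] u₀) (A p) ∧ LeOn I (A p) (A^[n + 1] v₀) := by
  rw [Function.iterate_succ_apply', Function.iterate_succ_apply']
  exact ⟨h.mono _ (h.iterate_left_mem n) _ hp hpn.1,
    h.mono _ hp _ (h.iterate_right_mem n) hpn.2⟩

theorem between_of_fixed (h : IsDuOperator I u₀ v₀ ε A) {p : X → ℝ} (hp : p ∈ 𝒟)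
    (hp_fixed : EqOn (A p) p I) (n : ℕ) : LeOn I (A^[n] u₀) p ∧ LeOn I p (A^[n] v₀) := by
  induction n with
  | zero => exact ⟨fun s hs => (hp.2 s hs).1, fun s hs => (hp.2 s hs).2⟩
  | succ n ih =>
    obtain ⟨hu, hv⟩ := h.apply_between hp ih
    exact ⟨fun s hs => hp_fixed hs ▸ hu s hs, fun s hs => hp_fixed hs ▸ hv s hs⟩

theorem exists_between (h : IsDuOperator I u₀ v₀ ε A) :
    ∃ x : X → ℝ, ∀ n, LeOn I (A^[n] u₀) x ∧ LeOn I x (A^[n] v₀) := by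
  refine ⟨fun s => ⨆ m, A^[m] u₀ s, fun n => ⟨fun s hs => ?_, fun s hs => ?_⟩⟩
  · exact le_ciSup ⟨_, forall_mem_range.2 fun m => h.iterate_left_le_iterate_right m 0 s hs⟩ n
  · exact ciSup_le fun m => h.iterate_left_le_iterate_right m n s hs

theorem exists_fixedPoint (h : IsDuOperator I u₀ v₀ ε A) (hI : IsCompact I) :
    ∃ x ∈ 𝒟, (∀ n, LeOn I (A^[n] u₀) x ∧ LeOn I x (A^[n] v₀)) ∧ EqOn (A x) x I := by
  obtain ⟨x, hx⟩ := h.exists_between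
  have hx_mem : x ∈ 𝒟 :=
    ⟨(h.tendstoUniformlyOn_of_between hI (h.iterate_between h.left_mem) hx).continuousOn
      (Frequently.of_forall fun n => (h.iterate_left_mem n).1),
     fun s hs => by simpa using ⟨(hx 0).1 s hs, (hx 0).2 s hs⟩⟩
  refine ⟨x, hx_mem, hx, h.eqOn_of_between hI (fun n => ?_) hx⟩
  obtain ⟨hu, hv⟩ := h.apply_between hx_mem (hx n)
  exact ⟨fun s hs => (h.monotone_iterate_left hs n.le_succ).trans (hu s hs),
    fun s hs => (hv s hs).trans (h.antitone_iterate_right hs n.le_succ)⟩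

end IsDuOperator

end DuOperator

theorem du_fixed_point_general (u0 v0 : ℝ → ℝ) (A : (ℝ → ℝ) → (ℝ → ℝ))
    (hu0 : ContinuousOn u0 (Set.Icc 0 1))
    (hv0 : ContinuousOn v0 (Set.Icc 0 1))
    (huv : ∀ s ∈ Set.Icc (0 : ℝ) 1, u0 s ≤ v0 s)
    (hA_cont : ∀ p : ℝ → ℝ, ContinuousOn p (Set.Icc 0 1) →
      (∀ s ∈ Set.Icc (0 : ℝ) 1, u0 s ≤ p s ∧ p s ≤ v0 s) →
      ContinuousOn (A p) (Set.Icc 0 1))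
    (hA_mono : ∀ p q : ℝ → ℝ,
      ContinuousOn p (Set.Icc 0 1) → ContinuousOn q (Set.Icc 0 1) →
      (∀ s ∈ Set.Icc (0 : ℝ) 1, u0 s ≤ p s ∧ p s ≤ v0 s) →
      (∀ s ∈ Set.Icc (0 : ℝ) 1, u0 s ≤ q s ∧ q s ≤ v0 s) →
      (∀ s ∈ Set.Icc (0 : ℝ) 1, p s ≤ q s) →
      ∀ s ∈ Set.Icc (0 : ℝ) 1, A p s ≤ A q s)
    (hA_concave : ∀ p q : ℝ → ℝ,
      ContinuousOn p (Set.Icc 0 1) → ContinuousOn q (Set.Icc 0 1) →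
      (∀ s ∈ Set.Icc (0 : ℝ) 1, u0 s ≤ p s ∧ p s ≤ v0 s) →
      (∀ s ∈ Set.Icc (0 : ℝ) 1, u0 s ≤ q s ∧ q s ≤ v0 s) →
      (∀ s ∈ Set.Icc (0 : ℝ) 1, p s ≤ q s) →
      ∀ α : ℝ, α ∈ Set.Icc (0 : ℝ) 1 →
        ∀ s ∈ Set.Icc (0 : ℝ) 1,
          α * A p s + (1 - α) * A q s ≤ A (fun x => α * p x + (1 - α) * q x) s)
    (hε : ∃ ε : ℝ, 0 < ε ∧ ε ≤ 1 ∧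
      ∀ s ∈ Set.Icc (0 : ℝ) 1, u0 s + ε * (v0 s - u0 s) ≤ A u0 s)
    (hAv0 : ∀ s ∈ Set.Icc (0 : ℝ) 1, A v0 s ≤ v0 s) :
    ∃ xstar : ℝ → ℝ,
      ContinuousOn xstar (Set.Icc 0 1) ∧
      (∀ s ∈ Set.Icc (0 : ℝ) 1, u0 s ≤ xstar s ∧ xstar s ≤ v0 s) ∧
      (∀ s ∈ Set.Icc (0 : ℝ) 1, A xstar s = xstar s) ∧
      (∀ q : ℝ → ℝ, ContinuousOn q (Set.Icc 0 1) →
        (∀ s ∈ Set.Icc (0 : ℝ) 1, u0 s ≤ q s ∧ q s ≤ v0 s) →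
        (∀ s ∈ Set.Icc (0 : ℝ) 1, A q s = q s) →
        Set.EqOn q xstar (Set.Icc 0 1)) ∧
      (∀ x0 : ℝ → ℝ, ContinuousOn x0 (Set.Icc 0 1) →
        (∀ s ∈ Set.Icc (0 : ℝ) 1, u0 s ≤ x0 s ∧ x0 s ≤ v0 s) →
        TendstoUniformlyOn (fun n : ℕ => A^[n] x0) xstar atTop (Set.Icc 0 1)) := by
  obtain ⟨ε, hε_pos, hε_le, hAu0⟩ := hε
  have hA : IsDuOperator (Icc 0 1) u0 v0 ε A :=
    { continuousOn_left := hu0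
      continuousOn_right := hv0
      left_le_right := huv
      continuousOn_apply := fun p hp => hA_cont p hp.1 hp.2
      mono := fun p hp q hq => hA_mono p q hp.1 hq.1 hp.2 hq.2
      concave := fun p hp q hq => hA_concave p q hp.1 hq.1 hp.2 hq.2
      eps_pos := hε_pos
      eps_le_one := hε_le
      le_apply_left := hAu0
      apply_right_le := hAv0 }
  obtain ⟨x, ⟨hx_cont, hx_mem⟩, hx_between, hx_fixed⟩ := hA.exists_fixedPoint isCompact_Icc
  refine ⟨x, hx_cont, hx_mem, hx_fixed, fun q hq_cont hq_mem hq_fixed => ?_,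
    fun x0 hx0_cont hx0_mem => ?_⟩
  · exact hA.eqOn_of_between isCompact_Icc (hA.between_of_fixed ⟨hq_cont, hq_mem⟩ hq_fixed)
      hx_between
  · exact hA.tendstoUniformlyOn_of_between isCompact_Icc
      (hA.iterate_between ⟨hx0_cont, hx0_mem⟩) hx_between

theorem du_fixed_point (u0 v0 : ℝ → ℝ) (A : (ℝ → ℝ) → (ℝ → ℝ))
    (hu0 : ContinuousOn u0 (Set.Icc 0 1))
    (hv0 : ContinuousOn v0 (Set.Icc 0 1))
    (huv : ∀ s ∈ Set.Icc (0 : ℝ) 1, u0 s ≤ v0 s)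
    (hne : ∃ s ∈ Set.Icc (0 : ℝ) 1, u0 s ≠ v0 s)
    (hA_cont : ∀ p : ℝ → ℝ, ContinuousOn p (Set.Icc 0 1) →
      (∀ s ∈ Set.Icc (0 : ℝ) 1, u0 s ≤ p s ∧ p s ≤ v0 s) →
      ContinuousOn (A p) (Set.Icc 0 1))
    (hA_mono : ∀ p q : ℝ → ℝ,
      ContinuousOn p (Set.Icc 0 1) → ContinuousOn q (Set.Icc 0 1) →
      (∀ s ∈ Set.Icc (0 : ℝ) 1, u0 s ≤ p s ∧ p s ≤ v0 s) →
      (∀ s ∈ Set.Icc (0 : ℝ) 1, u0 s ≤ q s ∧ q s ≤ v0 s) →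
      (∀ s ∈ Set.Icc (0 : ℝ) 1, p s ≤ q s) →
      ∀ s ∈ Set.Icc (0 : ℝ) 1, A p s ≤ A q s)
    (hA_concave : ∀ p q : ℝ → ℝ,
      ContinuousOn p (Set.Icc 0 1) → ContinuousOn q (Set.Icc 0 1) →
      (∀ s ∈ Set.Icc (0 : ℝ) 1, u0 s ≤ p s ∧ p s ≤ v0 s) →
      (∀ s ∈ Set.Icc (0 : ℝ) 1, u0 s ≤ q s ∧ q s ≤ v0 s) →
      (∀ s ∈ Set.Icc (0 : ℝ) 1, p s ≤ q s) →
      ∀ α : ℝ, α ∈ Set.Icc (0 : ℝ) 1 →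
        ∀ s ∈ Set.Icc (0 : ℝ) 1,
          α * A p s + (1 - α) * A q s ≤ A (fun x => α * p x + (1 - α) * q x) s)
    (hε : ∃ ε : ℝ, 0 < ε ∧ ε ≤ 1 ∧
      ∀ s ∈ Set.Icc (0 : ℝ) 1, u0 s + ε * (v0 s - u0 s) ≤ A u0 s)
    (hAv0 : ∀ s ∈ Set.Icc (0 : ℝ) 1, A v0 s ≤ v0 s) :
    ∃ xstar : ℝ → ℝ,
      ContinuousOn xstar (Set.Icc 0 1) ∧
      (∀ s ∈ Set.Icc (0 : ℝ) 1, u0 s ≤ xstar s ∧ xstar s ≤ v0 s) ∧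
      (∀ s ∈ Set.Icc (0 : ℝ) 1, A xstar s = xstar s) ∧
      (∀ q : ℝ → ℝ, ContinuousOn q (Set.Icc 0 1) →
        (∀ s ∈ Set.Icc (0 : ℝ) 1, u0 s ≤ q s ∧ q s ≤ v0 s) →
        (∀ s ∈ Set.Icc (0 : ℝ) 1, A q s = q s) →
        Set.EqOn q xstar (Set.Icc 0 1)) ∧
      (∀ x0 : ℝ → ℝ, ContinuousOn x0 (Set.Icc 0 1) →
        (∀ s ∈ Set.Icc (0 : ℝ) 1, u0 s ≤ x0 s ∧ x0 s ≤ v0 s) →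
        TendstoUniformlyOn (fun n : ℕ => A^[n] x0) xstar atTop (Set.Icc 0 1)) :=
  du_fixed_point_general u0 v0 A hu0 hv0 huv hA_cont hA_mono hA_concave hε hAv0
end

section
/- For every n ∈ ℕ, the function p_n produced by the recursive grid algorithm is (weakly) increasing on [0,1]. -/
open Set Filter

noncomputable def interp (h : ℝ) (v : ℕ → ℝ) (x : ℝ) : ℝ :=
  v ⌊x / h⌋₊ + (x / h - ⌊x / h⌋₊) * (v (⌊x / h⌋₊ + 1) - v ⌊x / h⌋₊)

noncomputable def gridVal (c : ℝ → ℝ) (g : ℕ → ℝ) (δ h : ℝ) : ℕ → ℝ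
  | 0 => 0
  | j + 1 =>
    sInf {y : ℝ | ∃ k : ℕ, ∃ t : ℝ, 1 ≤ k ∧ 0 ≤ t ∧ t ≤ j * h ∧
      y = c ((j + 1) * h - t) + g k +
        δ * k * interp h (fun i => gridVal c g δ h (min i j)) (t / k)}
  termination_by j => j
  decreasing_by exact Nat.lt_succ_of_le (Nat.min_le_right i j)

noncomputable def algP (c : ℝ → ℝ) (g : ℕ → ℝ) (δ : ℝ) (n : ℕ) : ℝ → ℝ :=
  interp ((1 / 2 : ℝ) ^ n) (gridVal c g δ ((1 / 2 : ℝ) ^ n))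

lemma frac_nonneg {h x : ℝ} (hh : 0 < h) (hx : 0 ≤ x) :
    0 ≤ x / h - ⌊x / h⌋₊ := by
  have := Nat.floor_le (div_nonneg hx hh.le)
  linarith

lemma frac_lt_one (h x : ℝ) : x / h - ⌊x / h⌋₊ < 1 := by
  have := Nat.lt_floor_add_one (x / h)
  linarith

lemma interp_zero {h : ℝ} (v : ℕ → ℝ) : interp h v 0 = v 0 := by
  simp [interp]

lemma interp_nonneg {h x : ℝ} {v : ℕ → ℝ} (hh : 0 < h) (hx : 0 ≤ x)
    (hv : ∀ i, 0 ≤ v i) : 0 ≤ interp h v x := by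
  have h1 := frac_nonneg hh hx
  have h2 := frac_lt_one h x
  have h3 := hv ⌊x / h⌋₊
  have h4 := hv (⌊x / h⌋₊ + 1)
  unfold interp
  nlinarith

lemma interp_mono_fun {h x : ℝ} {v w : ℕ → ℝ} (hh : 0 < h) (hx : 0 ≤ x)
    (hvw : ∀ i, v i ≤ w i) : interp h v x ≤ interp h w x := by
  have h1 := frac_nonneg hh hx
  have h2 := frac_lt_one h x
  have h3 := hvw ⌊x / h⌋₊
  have h4 := hvw (⌊x / h⌋₊ + 1)
  unfold interp
  nlinarith

lemma interp_mono_arg {h : ℝ} {v : ℕ → ℝ} (hh : 0 < h) (hv : Monotone v)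
    {x y : ℝ} (hx : 0 ≤ x) (hxy : x ≤ y) : interp h v x ≤ interp h v y := by
  have hy : 0 ≤ y := hx.trans hxy
  have hmm' : ⌊x / h⌋₊ ≤ ⌊y / h⌋₊ := Nat.floor_le_floor (by gcongr)
  have h1 := frac_nonneg hh hx
  have h2 := frac_lt_one h x
  have h1' := frac_nonneg hh hy
  have h2' := frac_lt_one h y
  rcases eq_or_lt_of_le hmm' with heq | hlt
  · have hθ : x / h ≤ y / h := by gcongr
    have hvv : v ⌊x / h⌋₊ ≤ v (⌊x / h⌋₊ + 1) := hv (Nat.le_succ _)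
    unfold interp
    rw [← heq]
    nlinarith
  · have hstep1 : interp h v x ≤ v (⌊x / h⌋₊ + 1) := by
      have hvv : v ⌊x / h⌋₊ ≤ v (⌊x / h⌋₊ + 1) := hv (Nat.le_succ _)
      unfold interp
      nlinarith
    have hstep2 : v (⌊x / h⌋₊ + 1) ≤ v ⌊y / h⌋₊ := hv hlt
    have hstep3 : v ⌊y / h⌋₊ ≤ interp h v y := by
      have hvv : v ⌊y / h⌋₊ ≤ v (⌊y / h⌋₊ + 1) := hv (Nat.le_succ _)
      unfold interp
      nlinarith
    linarith

lemma interp_cap {h : ℝ} (hh : 0 < h) (v : ℕ → ℝ) (N : ℕ) {x : ℝ}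
    (hx : 0 ≤ x) (hxN : x ≤ N * h) :
    interp h v x = interp h (fun i => v (min i N)) x := by
  rcases eq_or_lt_of_le hxN with heq | hlt
  · have hdiv : x / h = N := by
      rw [heq]; field_simp
    unfold interp
    rw [hdiv]
    simp
  · have hdiv : x / h < N := by
      rw [div_lt_iff₀ hh]; exact hlt
    have hm : ⌊x / h⌋₊ < N := (Nat.floor_lt (div_nonneg hx hh.le)).mpr hdiv
    unfold interp
    have h1 : min ⌊x / h⌋₊ N = ⌊x / h⌋₊ := min_eq_left hm.le
    have h2 : min (⌊x / h⌋₊ + 1) N = ⌊x / h⌋₊ + 1 := min_eq_left hm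
    simp only [h1, h2]

set_option maxHeartbeats 1000000 in
lemma gridVal_key (c : ℝ → ℝ) (g : ℕ → ℝ) (δ h : ℝ) (hh : 0 < h)
    (hc_mono : MonotoneOn c (Set.Icc 0 1)) (hc0 : c 0 = 0)
    (hg_nonneg : ∀ k : ℕ, 1 ≤ k → 0 ≤ g k) (hδ : 0 < δ) :
    ∀ j : ℕ, (j : ℝ) * h ≤ 1 →
      (∀ i, i ≤ j → 0 ≤ gridVal c g δ h i) ∧
      (∀ i i', i ≤ i' → i' ≤ j → gridVal c g δ h i ≤ gridVal c g δ h i') := by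
  intro j
  induction j with
  | zero =>
    intro _
    constructor
    · intro i hi
      interval_cases i
      rw [gridVal]
    · intro i i' hi hi'
      interval_cases i'
      interval_cases i
      exact le_rfl
  | succ j IH =>
    intro hj1
    have hj1h : ((j : ℝ) + 1) * h ≤ 1 := by push_cast at hj1; linarith
    have hjh : (j : ℝ) * h ≤ 1 := by nlinarith [hh.le]
    obtain ⟨Hnn, Hm⟩ := IH hjh
    have hvj_mono : Monotone (fun i => gridVal c g δ h (min i j)) := by
      intro a b hab
      exact Hm _ _ (min_le_min hab le_rfl) (min_le_right _ _)
    have hvj_nonneg : ∀ i, 0 ≤ gridVal c g δ h (min i j) := fun i =>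
      Hnn _ (min_le_right _ _)
    have key : gridVal c g δ h j ≤ gridVal c g δ h (j + 1) := by
      rw [show gridVal c g δ h (j+1) = sInf {y : ℝ | ∃ k : ℕ, ∃ t : ℝ, 1 ≤ k ∧ 0 ≤ t ∧ t ≤ j * h ∧
        y = c ((j + 1) * h - t) + g k +
          δ * k * interp h (fun i => gridVal c g δ h (min i j)) (t / k)} from by rw [gridVal]]
      apply le_csInf
      · exact ⟨_, 1, 0, le_rfl, le_rfl, by positivity, rfl⟩
      · rintro b ⟨k, t, hk, ht0, htj, rfl⟩
        have hkR : (1 : ℝ) ≤ k := by exact_mod_cast hk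
        have hδk : 0 ≤ δ * k := by positivity
        have htk0 : 0 ≤ t / k := by positivity
        have hInn : 0 ≤ interp h (fun i => gridVal c g δ h (min i j)) (t / k) :=
          interp_nonneg hh htk0 hvj_nonneg
        have hgk : 0 ≤ g k := hg_nonneg k hk
        cases j with
        | zero =>
          have h00 : gridVal c g δ h 0 = 0 := by rw [gridVal]
          rw [h00]
          have ht : t = 0 := le_antisymm (by simpa using htj) ht0
          subst ht
          norm_num at hInn hj1h ⊢
          have hch : c 0 ≤ c h := hc_mono ⟨le_rfl, zero_le_one⟩ ⟨hh.le, by linarith⟩ hh.le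
          rw [hc0] at hch
          nlinarith [mul_nonneg hδk hInn]
        | succ j' =>
          have e0 : (0 : ℝ) ≤ (j' : ℝ) * h := by positivity
          have htjR : t ≤ ((j' : ℝ) + 1) * h := by push_cast at htj; linarith
          have hj2 : ((j' : ℝ) + 1 + 1) * h ≤ 1 := by push_cast at hj1h; linarith
          rw [show gridVal c g δ h (j'+1) = sInf {y : ℝ | ∃ k : ℕ, ∃ t : ℝ, 1 ≤ k ∧ 0 ≤ t ∧ t ≤ j' * h ∧
            y = c ((j' + 1) * h - t) + g k +
              δ * k * interp h (fun i => gridVal c g δ h (min i j')) (t / k)} from by rw [gridVal]]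
          have hvj'_nonneg : ∀ i, 0 ≤ gridVal c g δ h (min i j') := fun i =>
            Hnn _ ((min_le_right _ _).trans (Nat.le_succ _))
          have hbdd : BddBelow {y : ℝ | ∃ k : ℕ, ∃ t : ℝ, 1 ≤ k ∧ 0 ≤ t ∧ t ≤ j' * h ∧
              y = c ((j' + 1) * h - t) + g k +
                δ * k * interp h (fun i => gridVal c g δ h (min i j')) (t / k)} := by
            refine ⟨0, ?_⟩
            rintro b ⟨k', t', hk', ht0', htj'', rfl⟩
            have hk'R : (1 : ℝ) ≤ k' := by exact_mod_cast hk'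
            have h1 : 0 ≤ δ * k' * interp h (fun i => gridVal c g δ h (min i j')) (t' / k') :=
              mul_nonneg (by positivity) (interp_nonneg hh (by positivity) hvj'_nonneg)
            have h2 : 0 ≤ c (((j' : ℝ) + 1) * h - t') := by
              have hm1 : ((j' : ℝ) + 1) * h - t' ∈ Set.Icc (0 : ℝ) 1 := by
                constructor
                · nlinarith
                · nlinarith
              have := hc_mono (Set.left_mem_Icc.mpr zero_le_one) hm1 hm1.1
              rwa [hc0] at this
            linarith [hg_nonneg k' hk']
          push_cast
          rcases le_total t h with hth | hth
          · have hmem : c (((j' : ℝ) + 1) * h - 0) + g k +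
                δ * k * interp h (fun i => gridVal c g δ h (min i j')) (0 / k) ∈
                {y : ℝ | ∃ k : ℕ, ∃ t : ℝ, 1 ≤ k ∧ 0 ≤ t ∧ t ≤ j' * h ∧
                  y = c ((j' + 1) * h - t) + g k +
                    δ * k * interp h (fun i => gridVal c g δ h (min i j')) (t / k)} :=
              ⟨k, 0, hk, le_rfl, e0, rfl⟩
            refine le_trans (csInf_le hbdd hmem) ?_
            have hI0 : interp h (fun i => gridVal c g δ h (min i j')) ((0 : ℝ) / k) = 0 := by
              rw [zero_div, interp_zero]
              show gridVal c g δ h (min 0 j') = 0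
              rw [min_eq_left (Nat.zero_le j'), gridVal]
            rw [hI0, mul_zero, add_zero, sub_zero]
            have hcc : c (((j' : ℝ) + 1) * h) ≤ c (((j' : ℝ) + 1 + 1) * h - t) := by
              apply hc_mono
              · exact ⟨by positivity, by nlinarith⟩
              · constructor
                · nlinarith
                · nlinarith
              · nlinarith
            have hB := mul_nonneg hδk hInn
            linarith
          · have hmem : c (((j' : ℝ) + 1) * h - (t - h)) + g k +
                δ * k * interp h (fun i => gridVal c g δ h (min i j')) ((t - h) / k) ∈
                {y : ℝ | ∃ k : ℕ, ∃ t : ℝ, 1 ≤ k ∧ 0 ≤ t ∧ t ≤ j' * h ∧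
                  y = c ((j' + 1) * h - t) + g k +
                    δ * k * interp h (fun i => gridVal c g δ h (min i j')) (t / k)} :=
              ⟨k, t - h, hk, by linarith, by
                have hexp : ((j' : ℝ) + 1) * h = (j' : ℝ) * h + h := by ring
                linarith, rfl⟩
            refine le_trans (csInf_le hbdd hmem) ?_
            have hceq : c (((j' : ℝ) + 1) * h - (t - h)) = c (((j' : ℝ) + 1 + 1) * h - t) := by
              congr 1
              ring
            have hII : interp h (fun i => gridVal c g δ h (min i j')) ((t - h) / k) ≤
                interp h (fun i => gridVal c g δ h (min i (j' + 1))) (t / k) := by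
              refine le_trans
                (interp_mono_fun hh (div_nonneg (by linarith) (by positivity)) ?_)
                (interp_mono_arg hh hvj_mono (div_nonneg (by linarith) (by positivity)) ?_)
              · intro i
                exact Hm _ _ (min_le_min le_rfl (Nat.le_succ j')) (min_le_right _ _)
              · exact div_le_div_of_nonneg_right (by linarith) (by positivity)
            have hmul := mul_le_mul_of_nonneg_left hII hδk
            linarith [hceq]
    constructor
    · intro i hi
      rcases eq_or_lt_of_le hi with rfl | hlt
      · exact (Hnn j le_rfl).trans key
      · exact Hnn i (Nat.lt_succ_iff.mp hlt)
    · intro i i' hii' hi'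
      rcases eq_or_lt_of_le hi' with rfl | hlt
      · rcases eq_or_lt_of_le hii' with rfl | hlt2
        · exact le_rfl
        · exact (Hm i j (Nat.lt_succ_iff.mp hlt2) le_rfl).trans key
      · exact Hm i i' hii' (Nat.lt_succ_iff.mp hlt)

theorem algP_monotone (c : ℝ → ℝ) (g : ℕ → ℝ) (δ : ℝ)
(hc_diff : DifferentiableOn ℝ c (Set.Icc 0 1))
    (hc_mono : StrictMonoOn c (Set.Icc 0 1))
    (hc_conv : StrictConvexOn ℝ (Set.Icc 0 1) c)
    (hc0 : c 0 = 0) (hc'0 : 0 < deriv c 0)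
    (hg_mono : StrictMonoOn g {k : ℕ | 1 ≤ k})
    (hg1 : g 1 = 0) (hg_nonneg : ∀ k : ℕ, 1 ≤ k → 0 ≤ g k)
    (hg_top : Tendsto g atTop atTop)
    (hδ : 1 < δ) :
    ∀ n : ℕ, MonotoneOn (algP c g δ n) (Set.Icc 0 1) := by
  intro n
  set h : ℝ := (1 / 2 : ℝ) ^ n with hh_def
  have hh : 0 < h := by positivity
  set N : ℕ := 2 ^ n with hN_def
  have hNh : (N : ℝ) * h = 1 := by
    rw [hN_def, hh_def]
    push_cast
    rw [← mul_pow]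
    norm_num
  obtain ⟨Hnn, Hm⟩ := gridVal_key c g δ h hh hc_mono.monotoneOn hc0 hg_nonneg
    (by linarith) N (le_of_eq hNh)
  have hcap_mono : Monotone (fun i => gridVal c g δ h (min i N)) := by
    intro a b hab
    exact Hm _ _ (min_le_min hab le_rfl) (min_le_right _ _)
  rintro x ⟨hx0, hx1⟩ y ⟨hy0, hy1⟩ hxy
  unfold algP
  rw [interp_cap hh _ N hx0 (by rw [hNh]; exact hx1),
    interp_cap hh _ N hy0 (by rw [hNh]; exact hy1)]
  exact interp_mono_arg hh hcap_mono hx0 hxy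
end
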